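/- arXiv:1704.07245 — 12 statements merged into one kernel-verified Lean document; each statement's English description precedes it below -/
import Mathlib

section
/- Let T be a tournament on {1,…,n}. If T contains a closed alternating walk, that is, a closed directed walk (c_0, c_1, …, c_{2k−1}) (indices mod 2k, k ≥ 2, vertices may repeat) in which every edge c_{2j} → c_{2j+1} is a descent and every edge c_{2j+1} → c_{2j+2} is an ascent, then T contains an alternating cycle of length 4, i.e., four distinct vertices c_0, c_1, c_2, c_3 with edges c_0 → c_1 (descent), c_1 → c_2 (ascent), c_2 → c_3 (descent), c_3 → c_0 (ascent). -/
/-- `T` is a tournament on the vertex set `{1, …, n}`: edges only join distinct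
vertices of `{1, …, n}`, and for each pair of distinct vertices exactly one
direction is present. -/
def IsTournamentOn (n : ℕ) (T : ℕ → ℕ → Prop) : Prop :=
  (∀ i j, T i j → i ∈ Finset.Icc 1 n ∧ j ∈ Finset.Icc 1 n ∧ i ≠ j) ∧
  (∀ i j, i ∈ Finset.Icc 1 n → j ∈ Finset.Icc 1 n → i ≠ j → (T i j ↔ ¬ T j i))

/-- `T` contains an alternating cycle: a directed cycle `(c 0, …, c (2k-1))`,
`k ≥ 2`, on distinct vertices of `{1, …, n}`, in which (indices mod `2k`) every
edge `c (2j) → c (2j+1)` is a descent and every edge `c (2j+1) → c (2j+2)` is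
an ascent. -/
def HasAltCycle (n : ℕ) (T : ℕ → ℕ → Prop) : Prop :=
  ∃ k : ℕ, 2 ≤ k ∧ ∃ c : ℕ → ℕ,
    (∀ i < 2 * k, c i ∈ Finset.Icc 1 n) ∧
    (∀ i < 2 * k, ∀ j < 2 * k, i ≠ j → c i ≠ c j) ∧
    (∀ j < k, T (c (2 * j)) (c (2 * j + 1)) ∧ c (2 * j + 1) < c (2 * j)) ∧
    (∀ j < k, T (c (2 * j + 1)) (c ((2 * j + 2) % (2 * k))) ∧
      c (2 * j + 1) < c ((2 * j + 2) % (2 * k)))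

/-- A tournament is alternation acyclic if it contains no alternating cycle. -/
def AltAcyclic (n : ℕ) (T : ℕ → ℕ → Prop) : Prop := ¬ HasAltCycle n T

/-- The right-alternating walk relation `u ⊑ v`: `u = v` or there is a directed
walk `u = w 0 → w 1 → ⋯ → w (2i) = v` inside `{1, …, n}` in which descents and
ascents alternate, the first edge being a descent and the last one an ascent. -/
def RAWalk (n : ℕ) (T : ℕ → ℕ → Prop) (u v : ℕ) : Prop :=
  u = v ∨ ∃ i : ℕ, 1 ≤ i ∧ ∃ w : ℕ → ℕ, w 0 = u ∧ w (2 * i) = v ∧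
    (∀ j ≤ 2 * i, w j ∈ Finset.Icc 1 n) ∧
    (∀ j < i, T (w (2 * j)) (w (2 * j + 1)) ∧ w (2 * j + 1) < w (2 * j)) ∧
    (∀ j < i, T (w (2 * j + 1)) (w (2 * j + 2)) ∧ w (2 * j + 1) < w (2 * j + 2))

/-- The parent function condition: `p` maps each `u ∈ {1,…,n}` to an element of
`{2,…,n} ∪ {∞}` with `p u > u`. -/
def IsParent (n : ℕ) (p : ℕ → ℕ∞) : Prop :=
  ∀ u ∈ Finset.Icc 1 n, (u : ℕ∞) < p u ∧ ∀ m : ℕ, p u = (m : ℕ∞) → m ∈ Finset.Icc 2 n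

/-- In the tournament induced by the code `(π, p)`, there is an ascent `u → v`
(for `u < v`) exactly when `p u` is finite and the position of `v` in `π` is at
least the position of `p u`. -/
def CodeAsc (π : Equiv.Perm ℕ) (p : ℕ → ℕ∞) (u v : ℕ) : Prop :=
  u < v ∧ ∃ m : ℕ, p u = (m : ℕ∞) ∧ π.symm m ≤ π.symm v

/-- The tournament induced by the code `(π, p)`: for `u < v` the edge `u → v` is
present exactly when `CodeAsc π p u v`, otherwise the edge `v → u` is present. -/
def CodeT (π : Equiv.Perm ℕ) (p : ℕ → ℕ∞) (u v : ℕ) : Prop :=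
  CodeAsc π p u v ∨ (v < u ∧ ¬ CodeAsc π p v u)

private lemma modTwoMulAdd (k j : ℕ) (hk : 1 ≤ k) :
    (2*j+1) % (2*k) = 2*(j % k) + 1 := by
  obtain ⟨m, hmlt, hmeq⟩ : ∃ m, m < k ∧ j % k = m := ⟨_, Nat.mod_lt _ (by omega), rfl⟩
  rw [Nat.add_mod, Nat.mul_mod_mul_left, hmeq,
    Nat.mod_eq_of_lt (show 1 < 2*k by omega),
    Nat.mod_eq_of_lt (show 2*m+1 < 2*k by omega)]

private lemma succMod (k j : ℕ) (hk : 0 < k) :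
    (j+1) % k = if j % k + 1 = k then 0 else j % k + 1 := by
  have h1 : (j + 1) % k = (j % k + 1) % k := (Nat.mod_add_mod j k 1).symm
  have h2 : j % k < k := Nat.mod_lt _ hk
  split_ifs with h
  · rw [h1, h, Nat.mod_self]
  · rw [h1, Nat.mod_eq_of_lt (by omega)]

private lemma altWalkAux (n : ℕ) (T : ℕ → ℕ → Prop) (hT : IsTournamentOn n T) :
    ∀ k : ℕ, 2 ≤ k → ∀ d : ℕ → ℕ,
      (∀ i, d (i + 2*k) = d i) →
      (∀ i, d i ∈ Finset.Icc 1 n) →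
      (∀ j, T (d (2*j)) (d (2*j+1)) ∧ d (2*j+1) < d (2*j)) →
      (∀ j, T (d (2*j+1)) (d (2*j+2)) ∧ d (2*j+1) < d (2*j+2)) →
      ∃ c0 c1 c2 c3 : ℕ,
        c0 ∈ Finset.Icc 1 n ∧ c1 ∈ Finset.Icc 1 n ∧
        c2 ∈ Finset.Icc 1 n ∧ c3 ∈ Finset.Icc 1 n ∧
        c0 ≠ c1 ∧ c0 ≠ c2 ∧ c0 ≠ c3 ∧ c1 ≠ c2 ∧ c1 ≠ c3 ∧ c2 ≠ c3 ∧
        T c0 c1 ∧ c1 < c0 ∧ T c1 c2 ∧ c1 < c2 ∧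
        T c2 c3 ∧ c3 < c2 ∧ T c3 c0 ∧ c3 < c0 := by
  intro k
  induction k using Nat.strong_induction_on with
  | _ k ih =>
    intro hk d hper hmem hdesc hasc
    have asym : ∀ a b, T a b → T b a → False := by
      intro a b hab hba
      obtain ⟨ha, hb, hne⟩ := hT.1 a b hab
      exact ((hT.2 a b ha hb hne).mp hab) hba
    by_cases hex : ∃ j, d (2*j+3) < d (2*j)
    · obtain ⟨j, hj⟩ := hex
      obtain ⟨h1t, h1l⟩ := hdesc j
      obtain ⟨h2t, h2l⟩ := hasc j
      have h3 : T (d (2*j+2)) (d (2*j+3)) ∧ d (2*j+3) < d (2*j+2) := by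
        have := hdesc (j+1)
        rwa [show 2*(j+1)+1 = 2*j+3 by ring, show 2*(j+1) = 2*j+2 by ring] at this
      obtain ⟨h3t, h3l⟩ := h3
      by_cases hya : T (d (2*j+3)) (d (2*j))
      · refine ⟨d (2*j), d (2*j+1), d (2*j+2), d (2*j+3), hmem _, hmem _, hmem _, hmem _,
          (by omega), ?_, (by omega), (by omega), ?_, (by omega),
          h1t, h1l, h2t, h2l, h3t, h3l, hya, hj⟩
        · intro h
          rw [← h] at h2t
          exact asym _ _ h1t h2t
        · intro h
          rw [← h] at h3t
          exact asym _ _ h2t h3t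
      · -- shorten the walk
        have hk3 : 3 ≤ k := by
          by_contra hcon
          have hk2 : k = 2 := by omega
          have h4 := hasc (j+1)
          rw [show 2*(j+1)+1 = 2*j+3 by ring,
            show 2*(j+1)+2 = 2*j+2*k by omega, hper (2*j)] at h4
          exact hya h4.1
        have hne : d (2*j) ≠ d (2*j+3) := by omega
        have hay : T (d (2*j)) (d (2*j+3)) :=
          (hT.2 _ _ (hmem _) (hmem _) hne).mpr hya
        set k' := k - 1 with hk'def
        have hkk : k = k' + 1 := by omega
        have hk'2 : 2 ≤ k' := by omega
        set w : ℕ → ℕ :=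
          fun i => if i % (2*k') = 0 then d (2*j) else d (i % (2*k') + (2*j+2)) with hw
        apply ih k' (by omega) hk'2 w
        · intro i
          simp only [hw, Nat.add_mod_right]
        · intro i
          simp only [hw]
          split <;> exact hmem _
        · intro j'
          obtain ⟨m, hmlt, hmeq⟩ : ∃ m, m < k' ∧ j' % k' = m :=
            ⟨_, Nat.mod_lt _ (by omega), rfl⟩
          have e0 : (2*j') % (2*k') = 2*m := by
            rw [Nat.mul_mod_mul_left, hmeq]
          have e1 : (2*j'+1) % (2*k') = 2*m + 1 := by
            rw [modTwoMulAdd k' j' (by omega), hmeq]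
          by_cases hm : m = 0
          · have w0 : w (2*j') = d (2*j) := by
              simp only [hw]
              rw [e0, hm, if_pos (by norm_num)]
            have w1 : w (2*j'+1) = d (2*j+3) := by
              simp only [hw]
              rw [e1, hm, if_neg (by omega)]
              congr 1
              omega
            rw [w0, w1]
            exact ⟨hay, hj⟩
          · have w0 : w (2*j') = d (2*(m+j+1)) := by
              simp only [hw]
              rw [e0, if_neg (by omega)]
              congr 1
              omega
            have w1 : w (2*j'+1) = d (2*(m+j+1)+1) := by
              simp only [hw]
              rw [e1, if_neg (by omega)]
              congr 1
              omega
            rw [w0, w1]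
            exact hdesc _
        · intro j'
          obtain ⟨m, hmlt, hmeq⟩ : ∃ m, m < k' ∧ j' % k' = m :=
            ⟨_, Nat.mod_lt _ (by omega), rfl⟩
          have e1 : (2*j'+1) % (2*k') = 2*m + 1 := by
            rw [modTwoMulAdd k' j' (by omega), hmeq]
          have e2 : (2*j'+2) % (2*k') = 2*((j'+1) % k') := by
            rw [show 2*j'+2 = 2*(j'+1) by ring, Nat.mul_mod_mul_left]
          have hs := succMod k' j' (by omega)
          rw [hmeq] at hs
          have w1 : w (2*j'+1) = d (2*(m+j+1)+1) := by
            simp only [hw]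
            rw [e1, if_neg (by omega)]
            congr 1
            omega
          by_cases hm : m + 1 = k'
          · rw [if_pos hm] at hs
            have w2 : w (2*j'+2) = d (2*j) := by
              simp only [hw]
              rw [e2, hs, if_pos (by norm_num)]
            rw [w1, w2]
            have h4 := hasc (m+j+1)
            rw [show 2*(m+j+1)+2 = 2*j+2*k by omega, hper (2*j)] at h4
            exact h4
          · rw [if_neg hm] at hs
            have w2 : w (2*j'+2) = d (2*(m+j+1)+2) := by
              simp only [hw]
              rw [e2, hs, if_neg (by omega)]
              congr 1
              omega
            rw [w1, w2]
            exact hasc _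
    · push_neg at hex
      have step : ∀ m, d (2*m) < d (2*m+4) := by
        intro m
        have h4 := hasc (m+1)
        rw [show 2*(m+1)+1 = 2*m+3 by ring, show 2*(m+1)+2 = 2*m+4 by ring] at h4
        exact lt_of_le_of_lt (hex m) h4.2
      have chain : ∀ m, d 0 < d (4*m+4) := by
        intro m
        induction m with
        | zero =>
          have := step 0
          norm_num at this ⊢
          exact this
        | succ m ihm =>
          have h5 := step (2*m+2)
          rw [show 2*(2*m+2) = 4*m+4 by ring] at h5
          refine lt_trans ihm ?_
          rw [show 4*(m+1)+4 = 4*m+4+4 by ring]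
          exact h5
      have e1 : d (4*k) = d (2*k) := by
        have := hper (2*k)
        rwa [show 2*k+2*k = 4*k by ring] at this
      have e2 : d (2*k) = d 0 := by
        have := hper 0
        rwa [Nat.zero_add] at this
      have hcontra := chain (k-1)
      rw [show 4*(k-1)+4 = 4*k by omega, e1, e2] at hcontra
      exact absurd hcontra (lt_irrefl _)

/-- If a tournament `T` on `{1,…,n}` contains a closed
alternating walk (vertices may repeat), then it contains an alternating cycle
of length 4: four distinct vertices `c0, c1, c2, c3` with edges
`c0 → c1` (descent), `c1 → c2` (ascent), `c2 → c3` (descent), `c3 → c0` (ascent). -/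
theorem closed_alt_walk_gives_alt_four_cycle
    (n : ℕ) (T : ℕ → ℕ → Prop) (hT : IsTournamentOn n T)
    (k : ℕ) (hk : 2 ≤ k) (c : ℕ → ℕ)
    (hmem : ∀ i < 2 * k, c i ∈ Finset.Icc 1 n)
    (hdesc : ∀ j < k, T (c (2 * j)) (c (2 * j + 1)) ∧ c (2 * j + 1) < c (2 * j))
    (hasc : ∀ j < k, T (c (2 * j + 1)) (c ((2 * j + 2) % (2 * k))) ∧
      c (2 * j + 1) < c ((2 * j + 2) % (2 * k))) :
    ∃ c0 c1 c2 c3 : ℕ,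
      c0 ∈ Finset.Icc 1 n ∧ c1 ∈ Finset.Icc 1 n ∧
      c2 ∈ Finset.Icc 1 n ∧ c3 ∈ Finset.Icc 1 n ∧
      c0 ≠ c1 ∧ c0 ≠ c2 ∧ c0 ≠ c3 ∧ c1 ≠ c2 ∧ c1 ≠ c3 ∧ c2 ≠ c3 ∧
      T c0 c1 ∧ c1 < c0 ∧ T c1 c2 ∧ c1 < c2 ∧
      T c2 c3 ∧ c3 < c2 ∧ T c3 c0 ∧ c3 < c0 := by
  have hkpos : 0 < 2 * k := by omega
  apply altWalkAux n T hT k hk (fun i => c (i % (2 * k)))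
  · intro i
    simp only [Nat.add_mod_right]
  · intro i
    exact hmem _ (Nat.mod_lt _ hkpos)
  · intro j
    rw [Nat.mul_mod_mul_left, modTwoMulAdd k j (by omega)]
    exact hdesc _ (Nat.mod_lt _ (by omega))
  · intro j
    have h3 : (2 * j + 2) % (2 * k) = (2 * (j % k) + 2) % (2 * k) := by
      rw [show 2*j+2 = 2*(j+1) by ring, show 2*(j % k)+2 = 2*(j % k+1) by ring,
        Nat.mul_mod_mul_left, Nat.mul_mod_mul_left, Nat.mod_add_mod]
    rw [modTwoMulAdd k j (by omega), h3]
    exact hasc _ (Nat.mod_lt _ (by omega))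
end

section
/- A tournament T on {1,…,n} is alternation acyclic if and only if it contains no alternating cycle of length 4, i.e., there do not exist four distinct vertices c_0, c_1, c_2, c_3 with edges c_0 → c_1 (descent), c_1 → c_2 (ascent), c_2 → c_3 (descent), c_3 → c_0 (ascent). -/
private lemma two_mul_mod' (a k : ℕ) : (2*a) % (2*k) = 2 * (a % k) := Nat.mul_mod_mul_left 2 a k

private lemma two_mul_add_one_mod' (a k : ℕ) (hk : 0 < k) :
    (2*a+1) % (2*k) = 2*(a % k) + 1 := by
  have h1 : a % k < k := Nat.mod_lt _ hk
  rw [Nat.add_mod, Nat.mul_mod_mul_left, Nat.mod_eq_of_lt (show (1:ℕ) < 2*k by omega),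
    Nat.mod_eq_of_lt (show 2*(a%k)+1 < 2*k by omega)]

/-- Rotating an alternating cycle by an even amount preserves its structure. -/
private lemma rotate_alt (n k s : ℕ) (T : ℕ → ℕ → Prop) (hk : 0 < k) (c c' : ℕ → ℕ)
    (hc' : ∀ i, c' i = c ((i + 2*s) % (2*k)))
    (hmem : ∀ i < 2*k, c i ∈ Finset.Icc 1 n)
    (hinj : ∀ i < 2*k, ∀ j < 2*k, i ≠ j → c i ≠ c j)
    (hdesc : ∀ j < k, T (c (2*j)) (c (2*j+1)) ∧ c (2*j+1) < c (2*j))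
    (hasc : ∀ j < k, T (c (2*j+1)) (c ((2*j+2) % (2*k))) ∧ c (2*j+1) < c ((2*j+2) % (2*k))) :
    (∀ i < 2*k, c' i ∈ Finset.Icc 1 n) ∧
    (∀ i < 2*k, ∀ j < 2*k, i ≠ j → c' i ≠ c' j) ∧
    (∀ j < k, T (c' (2*j)) (c' (2*j+1)) ∧ c' (2*j+1) < c' (2*j)) ∧
    (∀ j < k, T (c' (2*j+1)) (c' ((2*j+2) % (2*k))) ∧ c' (2*j+1) < c' ((2*j+2) % (2*k))) := by
  have hmodlt : ∀ i : ℕ, (i + 2*s) % (2*k) < 2*k := fun i => Nat.mod_lt _ (by omega)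
  refine ⟨?_, ?_, ?_, ?_⟩
  · intro i _; rw [hc']; exact hmem _ (hmodlt i)
  · intro i hi j hj hij
    rw [hc', hc']
    refine hinj _ (hmodlt i) _ (hmodlt j) ?_
    intro h
    have : i % (2*k) = j % (2*k) := by
      have h2 : (i + 2*s) ≡ (j + 2*s) [MOD 2*k] := h
      exact Nat.ModEq.add_right_cancel' (2*s) h2
    rw [Nat.mod_eq_of_lt hi, Nat.mod_eq_of_lt hj] at this
    exact hij this
  · intro j hj
    have e1 : (2*j + 2*s) % (2*k) = 2*((j+s) % k) := by
      rw [show 2*j+2*s = 2*(j+s) by ring, two_mul_mod']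
    have e2 : (2*j+1 + 2*s) % (2*k) = 2*((j+s) % k) + 1 := by
      rw [show 2*j+1+2*s = 2*(j+s)+1 by ring, two_mul_add_one_mod' _ _ hk]
    rw [hc', hc', e1, e2]
    exact hdesc _ (Nat.mod_lt _ hk)
  · intro j hj
    set m := (j+s) % k with hm
    have e2 : (2*j+1 + 2*s) % (2*k) = 2*m + 1 := by
      rw [show 2*j+1+2*s = 2*(j+s)+1 by ring, two_mul_add_one_mod' _ _ hk]
    have e3 : ((2*j+2) % (2*k) + 2*s) % (2*k) = (2*m+2) % (2*k) := by
      rw [show (2*j+2) = 2*(j+1) by ring, two_mul_mod',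
        show 2*((j+1)%k) + 2*s = 2*((j+1)%k + s) by ring, two_mul_mod',
        show (2*m+2) = 2*(m+1) by ring, two_mul_mod']
      congr 1
      rw [Nat.mod_add_mod, hm, Nat.mod_add_mod, Nat.add_right_comm]
    rw [hc', hc', e2, e3]
    exact hasc m (Nat.mod_lt _ hk)

/-- Any alternating cycle yields an alternating 4-cycle. -/
private lemma key (n : ℕ) (T : ℕ → ℕ → Prop) (hT : IsTournamentOn n T) :
    ∀ k, 2 ≤ k → ∀ c : ℕ → ℕ,
      (∀ i < 2*k, c i ∈ Finset.Icc 1 n) →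
      (∀ i < 2*k, ∀ j < 2*k, i ≠ j → c i ≠ c j) →
      (∀ j < k, T (c (2*j)) (c (2*j+1)) ∧ c (2*j+1) < c (2*j)) →
      (∀ j < k, T (c (2*j+1)) (c ((2*j+2) % (2*k))) ∧ c (2*j+1) < c ((2*j+2) % (2*k))) →
      ∃ c0 c1 c2 c3 : ℕ,
        c0 ∈ Finset.Icc 1 n ∧ c1 ∈ Finset.Icc 1 n ∧
        c2 ∈ Finset.Icc 1 n ∧ c3 ∈ Finset.Icc 1 n ∧
        c0 ≠ c1 ∧ c0 ≠ c2 ∧ c0 ≠ c3 ∧ c1 ≠ c2 ∧ c1 ≠ c3 ∧ c2 ≠ c3 ∧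
        T c0 c1 ∧ c1 < c0 ∧ T c1 c2 ∧ c1 < c2 ∧
        T c2 c3 ∧ c3 < c2 ∧ T c3 c0 ∧ c3 < c0 := by
  intro k
  induction k using Nat.strong_induction_on with
  | _ k ih =>
    intro hk c hmem hinj hdesc hasc
    rcases eq_or_lt_of_le hk with hk2 | hk3
    · -- base case k = 2
      subst hk2
      have d0 := hdesc 0 (by omega)
      have d1 := hdesc 1 (by omega)
      have a0 := hasc 0 (by omega)
      have a1 := hasc 1 (by omega)
      norm_num at d0 d1 a0 a1
      refine ⟨c 0, c 1, c 2, c 3, hmem 0 (by omega), hmem 1 (by omega), hmem 2 (by omega),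
        hmem 3 (by omega), ?_, ?_, ?_, ?_, ?_, ?_, d0.1, d0.2, a0.1, a0.2, d1.1, d1.2, a1.1, a1.2⟩
      all_goals exact hinj _ (by omega) _ (by omega) (by omega)
    · -- k ≥ 3
      -- find the minimum vertex; it sits at an odd position i0 = 2*j0+1
      obtain ⟨i0, hi0r, hi0min⟩ :=
        Finset.exists_min_image (Finset.range (2*k)) c ⟨0, by simp; omega⟩
      rw [Finset.mem_range] at hi0r
      have hi0min' : ∀ i < 2*k, c i0 ≤ c i := by
        intro i hi; exact hi0min i (Finset.mem_range.mpr hi)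
      have hodd : i0 % 2 = 1 := by
        by_contra h
        obtain ⟨j, hj⟩ : ∃ j, i0 = 2*j := ⟨i0/2, by omega⟩
        have h1 := (hdesc j (by omega)).2
        have h2 := hi0min' (2*j+1) (by omega)
        have h3 : c (2*j) = c i0 := by rw [hj]
        omega
      obtain ⟨j0, hj0⟩ : ∃ j0, i0 = 2*j0 + 1 := ⟨i0/2, by omega⟩
      have hj0k : j0 < k := by omega
      -- rotate so that the minimum is at position 2*(k-2)+1
      set s := (j0 + 2) % k with hs
      set c' : ℕ → ℕ := fun i => c ((i + 2*s) % (2*k)) with hc'def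
      obtain ⟨hmem', hinj', hdesc', hasc'⟩ :=
        rotate_alt n k s T (by omega) c c' (fun i => rfl) hmem hinj hdesc hasc
      have hsk : s < k := Nat.mod_lt _ (by omega)
      have hA : (2*(k-2)+1 + 2*s) % (2*k) = i0 := by
        rw [show 2*(k-2)+1+2*s = 2*(k-2+s)+1 by ring, two_mul_add_one_mod' _ _ (by omega)]
        have : (k-2+s) % k = j0 := by
          calc (k-2 + s) % k = (s + (k-2)) % k := by rw [Nat.add_comm]
            _ = ((j0+2) + (k-2)) % k := by rw [hs, Nat.mod_add_mod]
            _ = (j0 + k) % k := by congr 1; omega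
            _ = j0 % k := Nat.add_mod_right j0 k
            _ = j0 := Nat.mod_eq_of_lt hj0k
        rw [this, hj0]
      have hB : c' (2*(k-2)+1) = c i0 := by
        show c ((2*(k-2)+1 + 2*s) % (2*k)) = c i0
        rw [hA]
      have hC : c' 0 = c (2*s) := by
        show c ((0 + 2*s) % (2*k)) = c (2*s)
        congr 1
        rw [Nat.zero_add]
        exact Nat.mod_eq_of_lt (by omega)
      have hlt : c' (2*(k-2)+1) < c' 0 := by
        rw [hB, hC]
        have hle := hi0min' (2*s) (by omega)
        have hne : c i0 ≠ c (2*s) := hinj i0 hi0r (2*s) (by omega) (by omega)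
        omega
      have hu : c' (2*(k-2)+1) ∈ Finset.Icc 1 n := hmem' _ (by omega)
      have hv : c' 0 ∈ Finset.Icc 1 n := hmem' 0 (by omega)
      by_cases hTuv : T (c' (2*(k-2)+1)) (c' 0)
      · -- shortcut ascent: shorter alternating cycle of half-length k-1
        refine ih (k-1) (by omega) (by omega) c' ?_ ?_ ?_ ?_
        · intro i hi; exact hmem' i (by omega)
        · intro i hi j hj hij; exact hinj' i (by omega) j (by omega) hij
        · intro j hj; exact hdesc' j (by omega)
        · intro j hj
          by_cases hj2 : j < k - 2
          · have e : (2*j+2) % (2*(k-1)) = 2*j+2 := Nat.mod_eq_of_lt (by omega)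
            have e' : (2*j+2) % (2*k) = 2*j+2 := Nat.mod_eq_of_lt (by omega)
            rw [e]
            have h := hasc' j (by omega)
            rw [e'] at h
            exact h
          · have hjeq : j = k-2 := by omega
            subst hjeq
            have e : (2*(k-2)+2) % (2*(k-1)) = 0 := by
              rw [show 2*(k-2)+2 = 2*(k-1) by omega]
              exact Nat.mod_self _
            rw [e]
            exact ⟨hTuv, hlt⟩
      · -- shortcut descent: immediate 4-cycle
        have hTvu : T (c' 0) (c' (2*(k-2)+1)) :=
          (hT.2 (c' 0) (c' (2*(k-2)+1)) hv hu (by omega)).mpr hTuv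
        have ha1 := hasc' (k-2) (by omega)
        rw [Nat.mod_eq_of_lt (show 2*(k-2)+2 < 2*k by omega)] at ha1
        have hd1 := hdesc' (k-1) (by omega)
        rw [show 2*(k-1) = 2*(k-2)+2 by omega, show 2*(k-2)+2+1 = 2*(k-2)+3 by omega] at hd1
        have ha2 := hasc' (k-1) (by omega)
        rw [show 2*(k-1)+1 = 2*(k-2)+3 by omega,
          show (2*(k-1)+2) % (2*k) = 0 by rw [show 2*(k-1)+2 = 2*k by omega]; exact Nat.mod_self _] at ha2
        refine ⟨c' 0, c' (2*(k-2)+1), c' (2*(k-2)+2), c' (2*(k-2)+3),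
          hv, hu, hmem' _ (by omega), hmem' _ (by omega),
          hinj' 0 (by omega) _ (by omega) (by omega),
          hinj' 0 (by omega) _ (by omega) (by omega),
          hinj' 0 (by omega) _ (by omega) (by omega),
          hinj' _ (by omega) _ (by omega) (by omega),
          hinj' _ (by omega) _ (by omega) (by omega),
          hinj' _ (by omega) _ (by omega) (by omega),
          hTvu, hlt, ha1.1, ha1.2, hd1.1, hd1.2, ha2.1, ha2.2⟩

/-- A tournament `T` on `{1,…,n}` is alternation acyclic if and
only if it contains no alternating cycle of length 4, i.e. there are no four
distinct vertices `c0, c1, c2, c3` with edges `c0 → c1` (descent),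
`c1 → c2` (ascent), `c2 → c3` (descent), `c3 → c0` (ascent). -/
theorem altAcyclic_iff_no_alt_four_cycle
    (n : ℕ) (T : ℕ → ℕ → Prop) (hT : IsTournamentOn n T) :
    AltAcyclic n T ↔
      ¬ ∃ c0 c1 c2 c3 : ℕ,
        c0 ∈ Finset.Icc 1 n ∧ c1 ∈ Finset.Icc 1 n ∧
        c2 ∈ Finset.Icc 1 n ∧ c3 ∈ Finset.Icc 1 n ∧
        c0 ≠ c1 ∧ c0 ≠ c2 ∧ c0 ≠ c3 ∧ c1 ≠ c2 ∧ c1 ≠ c3 ∧ c2 ≠ c3 ∧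
        T c0 c1 ∧ c1 < c0 ∧ T c1 c2 ∧ c1 < c2 ∧
        T c2 c3 ∧ c3 < c2 ∧ T c3 c0 ∧ c3 < c0 := by
  unfold AltAcyclic HasAltCycle
  constructor
  · intro hac h4
    obtain ⟨c0, c1, c2, c3, m0, m1, m2, m3, n01, n02, n03, n12, n13, n23,
      t01, l01, t12, l12, t23, l23, t30, l30⟩ := h4
    apply hac
    refine ⟨2, le_refl 2, fun i => if i = 0 then c0 else if i = 1 then c1 else
      if i = 2 then c2 else c3, ?_, ?_, ?_, ?_⟩
    · intro i hi
      interval_cases i <;> simp [m0, m1, m2, m3]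
    · intro i hi j hj hij
      interval_cases i <;> interval_cases j <;> (try norm_num) <;> omega
    · intro j hj
      interval_cases j <;> norm_num <;> exact ⟨by assumption, by assumption⟩
    · intro j hj
      interval_cases j <;> norm_num <;> exact ⟨by assumption, by assumption⟩
  · intro h4 hac
    obtain ⟨k, hk, c, h1, h2, h3, h4'⟩ := hac
    exact h4 (key n T hT k hk c h1 h2 h3 h4')
end

section
/- A tournament T on {1,…,n} is alternation acyclic if and only if the right-alternating walk relation ⊑ induced by T is a partial order on {1,…,n} (equivalently, since ⊑ is always reflexive and transitive, if and only if ⊑ is antisymmetric). -/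
def CW (n : ℕ) (T : ℕ → ℕ → Prop) (m : ℕ) (w : ℕ → ℕ) : Prop :=
  w (2*m) = w 0 ∧ (∀ j < 2*m, w j ∈ Finset.Icc 1 n) ∧
  (∀ j < m, T (w (2*j)) (w (2*j+1)) ∧ w (2*j+1) < w (2*j)) ∧
  (∀ j < m, T (w (2*j+1)) (w (2*j+2)) ∧ w (2*j+1) < w (2*j+2))

lemma cw_not_one {n : ℕ} {T : ℕ → ℕ → Prop} (hT : IsTournamentOn n T)
    {w : ℕ → ℕ} (h : CW n T 1 w) : False := by
  obtain ⟨h0, hmem, hD, hA⟩ := h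
  have hd := hD 0 one_pos
  have ha := hA 0 one_pos
  simp only [Nat.mul_zero, Nat.zero_add] at hd ha
  rw [show (2:ℕ)*1 = 2 from rfl] at h0
  rw [h0] at ha
  have m0 : w 0 ∈ Finset.Icc 1 n := hmem 0 (by omega)
  have m1 : w 1 ∈ Finset.Icc 1 n := hmem 1 (by omega)
  have hne : w 0 ≠ w 1 := by omega
  exact ((hT.2 (w 0) (w 1) m0 m1 hne).mp hd.1) ha.1

lemma cw_rotOne {n : ℕ} {T : ℕ → ℕ → Prop} {m : ℕ} {w : ℕ → ℕ}
    (h : CW n T m w) (hm : 1 ≤ m) :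
    CW n T m (fun j => if 2 + j ≤ 2*m then w (2+j) else w (2+j-2*m)) := by
  obtain ⟨h0, hmem, hD, hA⟩ := h
  refine ⟨?_, ?_, ?_, ?_⟩
  · simp only
    rw [if_neg (by omega), if_pos (by omega)]
    congr 1; omega
  · intro j hj
    simp only
    split_ifs with hc
    · rcases Nat.lt_or_ge (2+j) (2*m) with hlt | hge
      · exact hmem _ hlt
      · have : 2 + j = 2*m := by omega
        rw [this, h0]; exact hmem 0 (by omega)
    · exact hmem _ (by omega)
  · intro j hj
    simp only
    rcases Nat.lt_or_ge j (m-1) with hlt | hge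
    · rw [if_pos (by omega), if_pos (by omega)]
      rw [show 2+(2*j+1) = 2*(j+1)+1 from by ring, show 2+2*j = 2*(j+1) from by ring]
      exact hD (j+1) (by omega)
    · have hj' : j = m - 1 := by omega
      subst hj'
      rw [if_pos (by omega), if_neg (by omega)]
      have e1 : 2 + 2*(m-1) = 2*m := by omega
      have e2 : 2 + (2*(m-1)+1) - 2*m = 1 := by omega
      rw [e1, e2, h0]
      have := hD 0 (by omega)
      simpa using this
  · intro j hj
    simp only
    rcases Nat.lt_or_ge j (m-1) with hlt | hge
    · rw [if_pos (by omega), if_pos (by omega)]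
      rw [show 2+(2*j+1) = 2*(j+1)+1 from by ring, show 2+(2*j+2) = 2*(j+1)+2 from by ring]
      exact hA (j+1) (by omega)
    · have hj' : j = m - 1 := by omega
      subst hj'
      rw [if_neg (by omega), if_neg (by omega)]
      have e1 : 2 + (2*(m-1)+1) - 2*m = 1 := by omega
      have e2 : 2 + (2*(m-1)+2) - 2*m = 2 := by omega
      rw [e1, e2]
      have := hA 0 (by omega)
      simpa using this

lemma cw_rotIter {n : ℕ} {T : ℕ → ℕ → Prop} {m : ℕ} {w : ℕ → ℕ}
    (h : CW n T m w) (hm : 1 ≤ m) :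
    ∀ t, t ≤ m → ∃ v, CW n T m v ∧ (∀ j, 2*t + j ≤ 2*m → v j = w (2*t + j)) ∧
      (∀ j, j ≤ 2*m → 2*m ≤ 2*t + j → v j = w (2*t + j - 2*m)) := by
  intro t
  induction t with
  | zero =>
    intro _
    refine ⟨w, h, fun j hj => by simp, fun j hj1 hj2 => ?_⟩
    have : j = 2*m := by omega
    rw [this, h.1]
    congr 1; omega
  | succ t ih =>
    intro ht
    obtain ⟨v, hv, hv1, hv2⟩ := ih (by omega)
    refine ⟨fun j => if 2 + j ≤ 2*m then v (2+j) else v (2+j-2*m),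
      cw_rotOne hv hm, ?_, ?_⟩
    · intro j hj
      simp only
      rw [if_pos (by omega), hv1 (2+j) (by omega)]
      congr 1; omega
    · intro j hj1 hj2
      simp only
      split_ifs with hc
      · rw [hv2 (2+j) (by omega) (by omega)]
        congr 1; omega
      · rw [hv1 (2+j-2*m) (by omega)]
        congr 1; omega

lemma cw_shorten_ee {n : ℕ} {T : ℕ → ℕ → Prop} {m : ℕ} {w : ℕ → ℕ}
    (h : CW n T m w) {a b : ℕ} (hab : a < b) (hb : 2*b < 2*m)
    (heq : w (2*a) = w (2*b)) :
    ∃ m', 1 ≤ m' ∧ m' < m ∧ ∃ w', CW n T m' w' := by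
  obtain ⟨h0, hmem, hD, hA⟩ := h
  refine ⟨b - a, by omega, by omega, fun j => w (2*a + j), ?_, ?_, ?_, ?_⟩
  · simp only
    rw [show 2*a + 2*(b-a) = 2*b from by omega, show 2*a + 0 = 2*a from by omega]
    exact heq.symm
  · intro j hj
    exact hmem _ (by omega)
  · intro j hj
    simp only
    rw [show 2*a + (2*j+1) = 2*(a+j)+1 from by ring, show 2*a + 2*j = 2*(a+j) from by ring]
    exact hD (a+j) (by omega)
  · intro j hj
    simp only
    rw [show 2*a + (2*j+1) = 2*(a+j)+1 from by ring, show 2*a + (2*j+2) = 2*(a+j)+2 from by ring]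
    exact hA (a+j) (by omega)

lemma cw_shorten_oo {n : ℕ} {T : ℕ → ℕ → Prop} {m : ℕ} {w : ℕ → ℕ}
    (h : CW n T m w) {a b : ℕ} (hab : a < b) (hb : 2*b+1 < 2*m)
    (heq : w (2*a+1) = w (2*b+1)) :
    ∃ m', 1 ≤ m' ∧ m' < m ∧ ∃ w', CW n T m' w' := by
  obtain ⟨h0, hmem, hD, hA⟩ := h
  refine ⟨b - a, by omega, by omega, fun j => if j < 2*(b-a) then w (2*a+2+j) else w (2*a+2),
    ?_, ?_, ?_, ?_⟩
  · simp only
    rw [if_neg (by omega), if_pos (by omega)]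
  · intro j hj
    simp only
    rw [if_pos hj]
    exact hmem _ (by omega)
  · intro j hj
    simp only
    rw [if_pos (by omega), if_pos (by omega)]
    rw [show 2*a+2+(2*j+1) = 2*(a+1+j)+1 from by ring, show 2*a+2+2*j = 2*(a+1+j) from by ring]
    exact hD (a+1+j) (by omega)
  · intro j hj
    simp only
    rw [if_pos (by omega)]
    rcases Nat.lt_or_ge (2*j+2) (2*(b-a)) with hlt | hge
    · rw [if_pos hlt]
      rw [show 2*a+2+(2*j+1) = 2*(a+1+j)+1 from by ring, show 2*a+2+(2*j+2) = 2*(a+1+j)+2 from by ring]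
      exact hA (a+1+j) (by omega)
    · rw [if_neg (by omega)]
      rw [show 2*a+2+(2*j+1) = 2*b+1 from by omega, ← heq,
        show 2*a+2 = 2*a+1+1 from by ring]
      exact hA a (by omega)

lemma cw_shorten_eo {n : ℕ} {T : ℕ → ℕ → Prop} (hT : IsTournamentOn n T)
    {m : ℕ} {w : ℕ → ℕ} (h : CW n T m w) (hm : 1 ≤ m) {b : ℕ} (hb : 2*b+1 < 2*m)
    (heq : w 0 = w (2*b+1)) :
    ∃ m', 1 ≤ m' ∧ m' < m ∧ ∃ w', CW n T m' w' := by
  obtain ⟨h0, hmem, hD, hA⟩ := h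
  have hD0 := hD 0 (by omega)
  simp only [Nat.mul_zero, Nat.zero_add] at hD0
  have hb1 : 1 ≤ b := by
    rcases Nat.eq_zero_or_pos b with h' | h'
    · exfalso; rw [h'] at heq; simp at heq; omega
    · exact h'
  have hb2 : b ≤ m - 2 := by
    by_contra hcon
    have hbm : b = m - 1 := by omega
    have := hA (m-1) (by omega)
    have e : 2*(m-1)+2 = 2*m := by omega
    rw [e, h0] at this
    rw [hbm] at heq
    omega
  have hAb := hA b (by omega)
  have hword : w 0 < w (2*b+2) := by
    rw [heq]; exact hAb.2
  have hm1 : w 1 ∈ Finset.Icc 1 n := hmem 1 (by omega)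
  have hm2 : w (2*b+2) ∈ Finset.Icc 1 n := hmem _ (by omega)
  have hne : w 1 ≠ w (2*b+2) := by omega
  by_cases hc : T (w 1) (w (2*b+2))
  · -- case A: short walk w0 → w1 → w(2b+2) → ... → w(2m)=w0
    refine ⟨m - b, by omega, by omega, fun j => if j ≤ 1 then w j else w (2*b + j),
      ?_, ?_, ?_, ?_⟩
    · simp only
      rw [if_neg (by omega), if_pos (by omega),
        show 2*b + 2*(m-b) = 2*m from by omega, h0]
    · intro j hj
      simp only
      split_ifs
      · exact hmem _ (by omega)
      · exact hmem _ (by omega)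
    · intro j hj
      simp only
      rcases Nat.eq_zero_or_pos j with h' | h'
      · subst h'
        rw [if_pos (by omega), if_pos (by omega)]
        simpa using hD 0 (by omega)
      · rw [if_neg (by omega), if_neg (by omega),
          show 2*b + (2*j+1) = 2*(b+j)+1 from by ring,
          show 2*b + 2*j = 2*(b+j) from by ring]
        exact hD (b+j) (by omega)
    · intro j hj
      simp only
      rcases Nat.eq_zero_or_pos j with h' | h'
      · subst h'
        rw [if_pos (by omega), if_neg (by omega)]
        exact ⟨by simpa using hc, by simp; omega⟩
      · rw [if_neg (by omega), if_neg (by omega),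
          show 2*b + (2*j+1) = 2*(b+j)+1 from by ring,
          show 2*b + (2*j+2) = 2*(b+j)+2 from by ring]
        exact hA (b+j) (by omega)
  · -- case B: w2 → ... → w(2b+1)=w0 →(A) w(2b+2) →(D) w1 →(A) w2
    have hc' : T (w (2*b+2)) (w 1) := by
      have := hT.2 (w 1) (w (2*b+2)) hm1 hm2 hne
      have := hT.2 (w (2*b+2)) (w 1) hm2 hm1 (Ne.symm hne)
      tauto
    refine ⟨b+1, by omega, by omega,
      fun j => if j < 2*b then w (2+j) else if j = 2*b then w (2*b+2)
        else if j = 2*b+1 then w 1 else w 2, ?_, ?_, ?_, ?_⟩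
    · simp only
      rw [if_neg (by omega), if_neg (by omega), if_neg (by omega), if_pos (by omega)]
    · intro j hj
      simp only
      split_ifs
      · exact hmem _ (by omega)
      · exact hmem _ (by omega)
      · exact hmem _ (by omega)
      · exact hmem _ (by omega)
    · intro j hj
      simp only
      rcases Nat.lt_or_ge j b with h' | h'
      · rw [if_pos (by omega), if_pos (by omega),
          show 2+(2*j+1) = 2*(j+1)+1 from by ring, show 2+2*j = 2*(j+1) from by ring]
        exact hD (j+1) (by omega)
      · have hjb : j = b := by omega
        subst hjb
        rw [if_neg (by omega), if_pos rfl, if_neg (by omega), if_neg (by omega),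
          if_pos rfl]
        exact ⟨hc', by omega⟩
    · intro j hj
      simp only
      rcases Nat.lt_or_ge j b with h' | h'
      · rcases Nat.lt_or_ge (2*j+2) (2*b) with h'' | h''
        · rw [if_pos (by omega), if_pos h'',
            show 2+(2*j+1) = 2*(j+1)+1 from by ring,
            show 2+(2*j+2) = 2*(j+1)+2 from by ring]
          exact hA (j+1) (by omega)
        · rw [if_pos (by omega), if_neg (by omega), if_pos (by omega),
            show 2+(2*j+1) = 2*b+1 from by omega]
          exact hA b (by omega)
      · have hjb : j = b := by omega
        subst hjb
        rw [if_neg (by omega), if_neg (by omega), if_pos rfl,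
          if_neg (by omega), if_neg (by omega), if_neg (by omega)]
        simpa using hA 0 (by omega)

lemma cw_to_cycle {n : ℕ} {T : ℕ → ℕ → Prop} (hT : IsTournamentOn n T) :
    ∀ m, 1 ≤ m → (∃ w, CW n T m w) → HasAltCycle n T := by
  intro m
  induction m using Nat.strong_induction_on with
  | _ m ih =>
    rintro hm ⟨w, hw⟩
    rcases Nat.lt_or_ge m 2 with hm2 | hm2
    · exact absurd hw (by
        have : m = 1 := by omega
        rw [this]; exact fun h => cw_not_one hT h)
    by_cases hinj : ∀ a, a < 2*m → ∀ b, b < 2*m → a ≠ b → w a ≠ w b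
    · -- w is injective on [0, 2m): we get an alternating cycle
      obtain ⟨h0, hmem, hD, hA⟩ := hw
      refine ⟨m, hm2, w, hmem, hinj, hD, ?_⟩
      intro j hj
      rcases Nat.lt_or_ge j (m-1) with hlt | hge
      · rw [Nat.mod_eq_of_lt (by omega)]
        exact hA j hj
      · have hj' : j = m - 1 := by omega
        subst hj'
        rw [show 2*(m-1)+2 = 2*m from by omega, Nat.mod_self]
        have := hA (m-1) (by omega)
        rw [show 2*(m-1)+2 = 2*m from by omega, h0] at this
        exact this
    · -- a repetition exists: shorten
      push_neg at hinj
      obtain ⟨a, ha, b, hb, hne, heq⟩ := hinj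
      -- WLOG a < b
      have key : ∀ a b, a < b → b < 2*m → w a = w b →
          ∃ m', 1 ≤ m' ∧ m' < m ∧ ∃ w', CW n T m' w' := by
        intro a b hab hb2 heq
        rcases Nat.even_or_odd a with ⟨a₀, ha0⟩ | ⟨a₀, ha0⟩ <;>
          rcases Nat.even_or_odd b with ⟨b₀, hb0⟩ | ⟨b₀, hb0⟩
        · -- even, even
          exact cw_shorten_ee hw (a := a₀) (b := b₀) (by omega) (by omega)
            (by rw [show 2*a₀ = a from by omega, show 2*b₀ = b from by omega]; exact heq)
        · -- even, odd : rotate a₀ steps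
          obtain ⟨v, hv, hv1, hv2⟩ := cw_rotIter hw (by omega) a₀ (by omega)
          refine cw_shorten_eo hT hv (by omega) (b := b₀ - a₀) (by omega) ?_
          rw [hv1 0 (by omega), hv1 (2*(b₀-a₀)+1) (by omega)]
          rw [show 2*a₀ + 0 = a from by omega,
            show 2*a₀ + (2*(b₀-a₀)+1) = b from by omega]
          exact heq
        · -- odd, even : rotate b₀ steps
          obtain ⟨v, hv, hv1, hv2⟩ := cw_rotIter hw (by omega) b₀ (by omega)
          refine cw_shorten_eo hT hv (by omega) (b := a₀ + m - b₀) (by omega) ?_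
          rw [hv1 0 (by omega), hv2 (2*(a₀ + m - b₀)+1) (by omega) (by omega)]
          rw [show 2*b₀ + 0 = b from by omega,
            show 2*b₀ + (2*(a₀+m-b₀)+1) - 2*m = a from by omega]
          exact heq.symm
        · -- odd, odd
          exact cw_shorten_oo hw (a := a₀) (b := b₀) (by omega) (by omega)
            (by rw [show 2*a₀+1 = a from by omega, show 2*b₀+1 = b from by omega]; exact heq)
      rcases Nat.lt_or_ge a b with hab | hab
      · obtain ⟨m', hm'1, hm'2, hw'⟩ := key a b hab hb heq
        exact ih m' hm'2 hm'1 hw'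
      · obtain ⟨m', hm'1, hm'2, hw'⟩ := key b a (by omega) ha heq.symm
        exact ih m' hm'2 hm'1 hw'

lemma rawalk_concat {n : ℕ} {T : ℕ → ℕ → Prop} {u v : ℕ}
    (h1 : RAWalk n T u v) (h2 : RAWalk n T v u) (hne : u ≠ v) :
    ∃ m, 1 ≤ m ∧ ∃ W, CW n T m W := by
  rcases h1 with h1 | ⟨i, hi, w, hw0, hwi, hwmem, hwD, hwA⟩
  · exact absurd h1 hne
  rcases h2 with h2 | ⟨i', hi', w', hw'0, hw'i, hw'mem, hw'D, hw'A⟩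
  · exact absurd h2.symm hne
  refine ⟨i + i', by omega, fun j => if j < 2*i then w j else w' (j - 2*i), ?_, ?_, ?_, ?_⟩
  · simp only
    rw [if_neg (by omega), if_pos (by omega),
      show 2*(i+i') - 2*i = 2*i' from by omega, hw'i, hw0]
  · intro j hj
    simp only
    split_ifs with hc
    · exact hwmem _ (by omega)
    · exact hw'mem _ (by omega)
  · intro j hj
    simp only
    rcases Nat.lt_or_ge j i with h' | h'
    · rw [if_pos (by omega), if_pos (by omega)]
      exact hwD j h'
    · rw [if_neg (by omega), if_neg (by omega),
        show 2*j+1 - 2*i = 2*(j-i)+1 from by omega,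
        show 2*j - 2*i = 2*(j-i) from by omega]
      exact hw'D (j-i) (by omega)
  · intro j hj
    simp only
    rcases Nat.lt_or_ge j i with h' | h'
    · rw [if_pos (by omega)]
      rcases Nat.lt_or_ge (2*j+2) (2*i) with h'' | h''
      · rw [if_pos h'']
        exact hwA j h'
      · rw [if_neg (by omega), show 2*j+2 - 2*i = 0 from by omega, hw'0, ← hwi,
          show 2*i = 2*j+2 from by omega]
        exact hwA j h'
    · rw [if_neg (by omega), if_neg (by omega),
        show 2*j+1 - 2*i = 2*(j-i)+1 from by omega,
        show 2*j+2 - 2*i = 2*(j-i)+2 from by omega]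
      exact hw'A (j-i) (by omega)

/-- A tournament `T` on `{1,…,n}` is alternation acyclic if and
only if the right-alternating walk relation `⊑` induced by `T` is a partial
order on `{1,…,n}`; since `⊑` is always reflexive and transitive, this amounts
to `⊑` being antisymmetric. -/
theorem altAcyclic_iff_rawalk_antisymm
    (n : ℕ) (T : ℕ → ℕ → Prop) (hT : IsTournamentOn n T) :
    AltAcyclic n T ↔
      ∀ u ∈ Finset.Icc 1 n, ∀ v ∈ Finset.Icc 1 n,
        RAWalk n T u v → RAWalk n T v u → u = v := by
  constructor
  · intro hAcyc u hu v hv huv hvu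
    by_contra hne
    obtain ⟨m, hm, W, hW⟩ := rawalk_concat huv hvu hne
    exact hAcyc (cw_to_cycle hT m hm ⟨W, hW⟩)
  · intro hanti hcyc
    obtain ⟨k, hk, c, hmem, hinj, hD, hA⟩ := hcyc
    have hu : c 0 ∈ Finset.Icc 1 n := hmem 0 (by omega)
    have hv : c 2 ∈ Finset.Icc 1 n := hmem 2 (by omega)
    have huv : RAWalk n T (c 0) (c 2) := by
      refine Or.inr ⟨1, le_refl 1, c, rfl, rfl, ?_, ?_, ?_⟩
      · intro j hj; exact hmem j (by omega)
      · intro j hj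
        have : j = 0 := by omega
        subst this
        exact hD 0 (by omega)
      · intro j hj
        have : j = 0 := by omega
        subst this
        have := hA 0 (by omega)
        rwa [Nat.mod_eq_of_lt (by omega)] at this
    have hvu : RAWalk n T (c 2) (c 0) := by
      refine Or.inr ⟨k - 1, by omega, fun j => if 2 + j < 2*k then c (2+j) else c 0,
        ?_, ?_, ?_, ?_, ?_⟩
      · simp only
        rw [if_pos (by omega)]
      · simp only
        rw [if_neg (by omega)]
      · intro j hj
        simp only
        split_ifs with hc
        · exact hmem _ hc
        · exact hmem 0 (by omega)
      · intro j hj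
        simp only
        rw [if_pos (by omega), if_pos (by omega),
          show 2+(2*j+1) = 2*(j+1)+1 from by ring, show 2+2*j = 2*(j+1) from by ring]
        exact hD (j+1) (by omega)
      · intro j hj
        simp only
        rw [if_pos (by omega), show 2+(2*j+1) = 2*(j+1)+1 from by ring]
        rcases Nat.lt_or_ge (2+(2*j+2)) (2*k) with h' | h'
        · rw [if_pos h', show 2+(2*j+2) = 2*(j+1)+2 from by ring]
          have := hA (j+1) (by omega)
          rwa [Nat.mod_eq_of_lt (by omega)] at this
        · rw [if_neg (by omega)]
          have := hA (j+1) (by omega)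
          rwa [show 2*(j+1)+2 = 2*k from by omega, Nat.mod_self] at this
    have := hanti (c 0) hu (c 2) hv huv hvu
    exact hinj 0 (by omega) 2 (by omega) (by omega) this
end

section
/- For every code (π, p) on {1,…,n}, the induced tournament T(π,p) is alternation acyclic; moreover π is a linear extension of the right-alternating walk relation ⊑ induced by T(π,p), i.e., u ⊑ v implies π⁻¹(u) ≤ π⁻¹(v). -/

lemma codeT_key (π : Equiv.Perm ℕ) (p : ℕ → ℕ∞) {a b d : ℕ}
    (h1 : CodeT π p a b) (hba : b < a) (h2 : CodeT π p b d) (hbd : b < d) :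
    π.symm a < π.symm d := by
  rcases h1 with h | ⟨_, hn⟩
  · exact absurd h.1 (by omega)
  rcases h2 with h | ⟨hd, _⟩
  · obtain ⟨_, m, hm, hle⟩ := h
    by_contra hcon
    push_neg at hcon
    exact hn ⟨hba, m, hm, hle.trans hcon⟩
  · omega

/-- For every code `(π, p)` on `{1,…,n}` (where `π` is a
permutation of `{1,…,n}` and `p` a parent function with `p u > u`), the induced
tournament `T(π,p)` is alternation acyclic, and `π` is a linear extension of
the right-alternating walk relation induced by `T(π,p)`: `u ⊑ v` implies
`π⁻¹ u ≤ π⁻¹ v`. -/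
theorem codeT_altAcyclic_and_linear_extension
    (n : ℕ) (π : Equiv.Perm ℕ) (p : ℕ → ℕ∞)
    (hπ : ∀ i, i ∈ Finset.Icc 1 n ↔ π i ∈ Finset.Icc 1 n)
    (hp : IsParent n p) :
    AltAcyclic n (CodeT π p) ∧
      ∀ u ∈ Finset.Icc 1 n, ∀ v ∈ Finset.Icc 1 n,
        RAWalk n (CodeT π p) u v → π.symm u ≤ π.symm v := by
  constructor
  · rintro ⟨k, hk, c, _, _, h3, h4⟩
    have step : ∀ j < k, π.symm (c (2 * j)) < π.symm (c ((2 * j + 2) % (2 * k))) := by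
      intro j hj
      obtain ⟨t1, t2⟩ := h3 j hj
      obtain ⟨t3, t4⟩ := h4 j hj
      exact codeT_key π p t1 t2 t3 t4
    have main : ∀ j < k, π.symm (c 0) < π.symm (c ((2 * j + 2) % (2 * k))) := by
      intro j
      induction j with
      | zero => intro hj; simpa using step 0 (by omega)
      | succ j ih =>
        intro hj
        have h2j : (2 * j + 2) % (2 * k) = 2 * (j + 1) := by
          rw [Nat.mod_eq_of_lt (by omega)]; omega
        have := ih (by omega)
        rw [h2j] at this
        exact this.trans (step (j + 1) hj)
    have := main (k - 1) (by omega)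
    have hmod : (2 * (k - 1) + 2) % (2 * k) = 0 := by
      have : 2 * (k - 1) + 2 = 2 * k := by omega
      simp [this]
    rw [hmod] at this
    exact lt_irrefl _ this
  · rintro u hu v hv (rfl | ⟨i, hi, w, hw0, hwi, _, h3, h4⟩)
    · exact le_refl _
    have main : ∀ j ≤ i, π.symm (w 0) ≤ π.symm (w (2 * j)) := by
      intro j
      induction j with
      | zero => intro _; exact le_refl _
      | succ j ih =>
        intro hj
        obtain ⟨t1, t2⟩ := h3 j (by omega)
        obtain ⟨t3, t4⟩ := h4 j (by omega)
        have hkey := codeT_key π p t1 t2 t3 t4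
        have : 2 * (j + 1) = 2 * j + 2 := by omega
        rw [this]
        exact le_trans (ih (by omega)) hkey.le
    have := main i (le_refl _)
    rw [hw0, hwi] at this
    exact this
end

section
/- Let x_1, …, x_n, y_1, …, y_{n−1} be real numbers such that x_i − y_i ≠ x_j for all 1 ≤ i < j ≤ n, and define a tournament T on {1,…,n} by putting, for each i < j, the edge i → j if x_i − y_i > x_j and the edge j → i if x_i − y_i < x_j. Then T is alternation acyclic. -/
/-- Let `x 1, …, x n, y 1, …, y (n-1)` be real numbers with
`x i - y i ≠ x j` for all `1 ≤ i < j ≤ n`, and let `T` be the tournament on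
`{1,…,n}` with edge `i → j` iff `x i - y i > x j` and edge `j → i` iff
`x i - y i < x j` (for `i < j`). Then `T` is alternation acyclic. -/
theorem region_tournament_altAcyclic
    (n : ℕ) (x y : ℕ → ℝ)
    (hgen : ∀ i j : ℕ, 1 ≤ i → i < j → j ≤ n → x i - y i ≠ x j)
    (T : ℕ → ℕ → Prop)
    (hTdef : ∀ i j : ℕ, 1 ≤ i → i < j → j ≤ n →
      (T i j ↔ x i - y i > x j) ∧ (T j i ↔ x i - y i < x j)) :
    AltAcyclic n T := by
  rintro ⟨k, hk, c, hmem, _hdist, hdesc, hasc⟩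
  have h2k : 0 < 2 * k := by omega
  have step : ∀ j < k, x (c ((2 * j + 2) % (2 * k))) < x (c (2 * j)) := by
    intro j hj
    obtain ⟨hT1, hlt1⟩ := hdesc j hj
    obtain ⟨hT2, hlt2⟩ := hasc j hj
    have m1 := hmem (2 * j) (by omega)
    have m2 := hmem (2 * j + 1) (by omega)
    have m3 := hmem ((2 * j + 2) % (2 * k)) (Nat.mod_lt _ h2k)
    simp only [Finset.mem_Icc] at m1 m2 m3
    have e1 := (hTdef (c (2 * j + 1)) (c (2 * j)) m2.1 hlt1 m1.2).2
    have e2 := (hTdef (c (2 * j + 1)) (c ((2 * j + 2) % (2 * k))) m2.1 hlt2 m3.2).1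
    have a1 := e1.mp hT1
    have a2 := e2.mp hT2
    linarith
  have chain : ∀ j ≤ k, 1 ≤ j → x (c ((2 * j) % (2 * k))) < x (c 0) := by
    intro j
    induction j with
    | zero => omega
    | succ m ih =>
      intro hle _
      have hm : m < k := by omega
      have hs := step m hm
      rcases Nat.eq_zero_or_pos m with h0 | hpos
      · subst h0
        simpa using hs
      · have hmod : 2 * m % (2 * k) = 2 * m := Nat.mod_eq_of_lt (by omega)
        have ihm := ih (by omega) hpos
        rw [hmod] at ihm
        have : 2 * (m + 1) = 2 * m + 2 := by ring
        rw [this]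
        linarith
  have := chain k le_rfl (by omega)
  rw [Nat.mod_self] at this
  exact lt_irrefl _ this
end

section
/- Let T be an alternation acyclic tournament on {1,…,n}. Then there exist real numbers x_1, …, x_n, y_1, …, y_{n−1} with x_i − y_i ≠ x_j for all 1 ≤ i < j ≤ n, such that for each i < j the tournament T has the edge i → j exactly when x_i − y_i > x_j (and the edge j → i exactly when x_i − y_i < x_j). -/
/-!
When `j → i` is a descent and `i → k` an ascent, every realization has `x k < x i - y i < x j`.
So the relation `AltStep T` (a descent followed by an ascent) must be acyclic, and conversely
acyclicity suffices: take `x j` to be the number of vertices reachable from `j` under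
`AltStep T`, and put `x i - y i` just above the largest `x k` over the ascents `i → k`.

Alternation acyclicity gives exactly this: a shortest closed alternating walk repeats no vertex,
hence is an alternating cycle. A vertex repeated at two peaks or at two valleys splits the walk
into shorter closed walks; a vertex `g a = w b` occurring as a peak and as a valley is handled by
the tournament edge between `w a` and `g (b + 1)`, which shortcuts the walk whichever way it points.
-/

open Relation

-- Indexing by all of `ℕ` lets cycles be rotated and cut without arithmetic mod `m`.
def IsClosedChain {α : Type*} (r : α → α → Prop) (m : ℕ) (g : ℕ → α) : Prop :=
  0 < m ∧ Function.Periodic g m ∧ ∀ i, r (g i) (g (i + 1))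

section Chains

variable {α : Type*} {r : α → α → Prop}

theorem isClosedChain_mod_of_path {g : ℕ → α} {d : ℕ} (hpath : ∀ i < d, r (g i) (g (i + 1)))
    (hlast : r (g d) (g 0)) : IsClosedChain r (d + 1) (fun i => g (i % (d + 1))) := by
  refine ⟨d.succ_pos, fun i => by simp, fun i => ?_⟩
  show r (g (i % (d + 1))) (g ((i + 1) % (d + 1)))
  rw [← Nat.mod_add_mod i (d + 1) 1]
  rcases Nat.lt_succ_iff_lt_or_eq.mp (Nat.mod_lt i d.succ_pos) with hlt | heq
  · rw [Nat.mod_eq_of_lt (Nat.succ_lt_succ hlt)]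
    exact hpath _ hlt
  · rw [heq, Nat.mod_self]
    exact hlast

theorem Relation.ReflTransGen.exists_path {a b : α} (h : ReflTransGen r a b) :
    ∃ d, ∃ g : ℕ → α, g 0 = a ∧ g d = b ∧ ∀ i < d, r (g i) (g (i + 1)) := by
  induction h with
  | refl => exact ⟨0, fun _ => a, rfl, rfl, by simp⟩
  | @tail b c _ hbc ih =>
    obtain ⟨d, g, h0, hd, hpath⟩ := ih
    refine ⟨d + 1, Function.update g (d + 1) c, by simpa using h0, by simp, fun i hi => ?_⟩
    rcases Nat.lt_succ_iff_lt_or_eq.mp hi with hlt | rfl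
    · rw [Function.update_of_ne (by omega), Function.update_of_ne (by omega)]
      exact hpath i hlt
    · simpa [hd] using hbc

theorem exists_isClosedChain_of_transGen_self {a : α} (h : TransGen r a a) :
    ∃ m g, IsClosedChain r m g := by
  obtain ⟨b, hab, hba⟩ := TransGen.tail'_iff.mp h
  obtain ⟨d, g, h0, hd, hpath⟩ := hab.exists_path
  exact ⟨_, _, isClosedChain_mod_of_path hpath (by rwa [hd, h0])⟩

theorem exists_rank_of_not_transGen_self (s : Finset α) (hs : ∀ a b, r a b → b ∈ s)
    (hr : ∀ a, ¬ TransGen r a a) : ∃ f : α → ℕ, ∀ a b, r a b → f b < f a := by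
  classical
  refine ⟨fun a => (s.filter (TransGen r a)).card, fun a b hab => Finset.card_lt_card ?_⟩
  refine (Finset.ssubset_iff_of_subset fun c hc => ?_).mpr ⟨b, ?_, fun hb => hr b ?_⟩
  · simp only [Finset.mem_filter] at hc ⊢
    exact ⟨hc.1, TransGen.head hab hc.2⟩
  · exact Finset.mem_filter.mpr ⟨hs a b hab, TransGen.single hab⟩
  · exact (Finset.mem_filter.mp hb).2

end Chains

section Tournament

variable {n : ℕ} {T : ℕ → ℕ → Prop}

theorem IsTournamentOn.asymm (hT : IsTournamentOn n T) {u v : ℕ} (h : T u v) : ¬ T v u :=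
  let ⟨hu, hv, huv⟩ := hT.1 u v h
  (hT.2 u v hu hv huv).mp h

theorem IsTournamentOn.total (hT : IsTournamentOn n T) {u v : ℕ} (hu : u ∈ Finset.Icc 1 n)
    (hv : v ∈ Finset.Icc 1 n) (huv : u ≠ v) : T u v ∨ T v u :=
  or_iff_not_imp_right.mpr (hT.2 u v hu hv huv).mpr

end Tournament

def DescAsc (T : ℕ → ℕ → Prop) (u x v : ℕ) : Prop :=
  T u x ∧ x < u ∧ T x v ∧ x < v

def AltStep (T : ℕ → ℕ → Prop) (u v : ℕ) : Prop :=
  ∃ x, DescAsc T u x v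

-- The closed alternating walk `g 0 → w 0 → g 1 → w 1 → ⋯ → g m = g 0` of length `2 * m`.
structure IsAltClosedWalk (T : ℕ → ℕ → Prop) (m : ℕ) (g w : ℕ → ℕ) : Prop where
  pos : 0 < m
  periodic_vertex : Function.Periodic g m
  periodic_witness : Function.Periodic w m
  step : ∀ i, DescAsc T (g i) (w i) (g (i + 1))

def interleave (g w : ℕ → ℕ) (i : ℕ) : ℕ :=
  if Even i then g (i / 2) else w (i / 2)

@[simp]
theorem interleave_two_mul (g w : ℕ → ℕ) (j : ℕ) : interleave g w (2 * j) = g j := by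
  simp [interleave]

@[simp]
theorem interleave_two_mul_add_one (g w : ℕ → ℕ) (j : ℕ) :
    interleave g w (2 * j + 1) = w j := by
  simp [interleave, Nat.add_div_of_dvd_right]

section AltWalk

variable {n : ℕ} {T : ℕ → ℕ → Prop} {m : ℕ} {g w : ℕ → ℕ}

theorem IsClosedChain.exists_isAltClosedWalk (h : IsClosedChain (AltStep T) m g) :
    ∃ w, IsAltClosedWalk T m g w := by
  have hW : ∀ u v, ∃ x, AltStep T u v → DescAsc T u x v := fun u v =>
    (em (AltStep T u v)).elim (fun ⟨x, hx⟩ => ⟨x, fun _ => hx⟩) fun hn => ⟨0, fun h => absurd h hn⟩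
  choose W hW using hW
  refine ⟨fun i => W (g i) (g (i + 1)), h.1, h.2.1, fun i => ?_, fun i => hW _ _ (h.2.2 i)⟩
  simp only [add_right_comm i m 1, h.2.1 i, h.2.1 (i + 1)]

theorem IsAltClosedWalk.altStep (h : IsAltClosedWalk T m g w) (i : ℕ) :
    AltStep T (g i) (g (i + 1)) :=
  ⟨w i, h.step i⟩

theorem IsAltClosedWalk.exists_shorter_of_vertex_eq (h : IsAltClosedWalk T m g w) {a b : ℕ}
    (hab : a < b) (hbm : b < m) (he : g a = g b) :
    ∃ m' < m, ∃ g', IsClosedChain (AltStep T) m' g' := by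
  obtain ⟨d, rfl⟩ : ∃ d, b = a + d + 1 := ⟨b - a - 1, by omega⟩
  refine ⟨d + 1, by omega, _, isClosedChain_mod_of_path (g := fun i => g (a + i))
    (fun i _ => by simpa only [add_assoc] using h.altStep (a + i)) ?_⟩
  simpa only [add_zero, ← he] using h.altStep (a + d)

theorem IsAltClosedWalk.exists_shorter_of_witness_eq (h : IsAltClosedWalk T m g w) {a b : ℕ}
    (hab : a < b) (hbm : b < m) (he : w a = w b) :
    ∃ m' < m, ∃ g', IsClosedChain (AltStep T) m' g' := by
  obtain ⟨d, rfl⟩ : ∃ d, b = a + 1 + d := ⟨b - a - 1, by omega⟩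
  refine ⟨d + 1, by omega, _, isClosedChain_mod_of_path (g := fun i => g (a + 1 + i))
    (fun i _ => by simpa only [add_assoc] using h.altStep (a + 1 + i)) ?_⟩
  obtain ⟨hTb, hltb, -, -⟩ := h.step (a + 1 + d)
  obtain ⟨-, -, hTa, hlta⟩ := h.step a
  exact ⟨w a, he ▸ hTb, he ▸ hltb, hTa, hlta⟩

theorem IsAltClosedWalk.exists_shorter_of_vertex_eq_witness (hT : IsTournamentOn n T)
    (h : IsAltClosedWalk T m g w) {a b : ℕ} (hab : a < b) (hbm : b < a + m) (he : g a = w b) :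
    ∃ m' < m, ∃ g', IsClosedChain (AltStep T) m' g' := by
  obtain ⟨hTa, hlta, hTa', hlta'⟩ := h.step a
  obtain ⟨-, -, hTb, hltb⟩ := h.step b
  rcases hT.total (hT.1 _ _ hTa).2.1 (hT.1 _ _ hTb).2.1 (by omega) with hasc | hdesc
  · -- `g a → w a → g (b + 1)` cuts out `g (a + 1), …, g b`
    obtain ⟨d, hd⟩ : ∃ d, a + m = b + 1 + d := ⟨a + m - b - 1, by omega⟩
    refine ⟨d + 1, by omega, _, isClosedChain_mod_of_path (g := fun i => g (b + 1 + i))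
      (fun i _ => by simpa only [add_assoc] using h.altStep (b + 1 + i)) ?_⟩
    show AltStep T (g (b + 1 + d)) (g (b + 1 + 0))
    rw [← hd, h.periodic_vertex, add_zero]
    exact ⟨w a, hTa, hlta, hasc, by omega⟩
  · -- `g (b + 1) → w a → g (a + 1)` closes up `g (a + 1), …, g (b + 1)`
    have hb : b + 1 ≠ a + m := fun hb => by
      rw [hb, h.periodic_vertex] at hltb
      omega
    obtain ⟨d, rfl⟩ : ∃ d, b = a + d := ⟨b - a, by omega⟩
    refine ⟨d + 1, by omega, _, isClosedChain_mod_of_path (g := fun i => g (a + 1 + i))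
      (fun i _ => by simpa only [add_assoc] using h.altStep (a + 1 + i)) ?_⟩
    show AltStep T (g (a + 1 + d)) (g (a + 1 + 0))
    rw [add_zero, add_right_comm]
    exact ⟨w a, hdesc, by omega, hTa', hlta'⟩

theorem IsAltClosedWalk.hasAltCycle (hT : IsTournamentOn n T) (h : IsAltClosedWalk T m g w)
    (hm : 2 ≤ m) (hinj : ∀ i < 2 * m, ∀ j < 2 * m, i ≠ j → interleave g w i ≠ interleave g w j) :
    HasAltCycle n T := by
  refine ⟨m, hm, interleave g w, fun i _ => ?_, hinj, fun j _ => ?_, fun j _ => ?_⟩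
  · obtain ⟨j, rfl | rfl⟩ := Nat.even_or_odd' i
    · simpa using (hT.1 _ _ (h.step j).1).1
    · simpa using (hT.1 _ _ (h.step j).1).2.1
  · simpa using ⟨(h.step j).1, (h.step j).2.1⟩
  · rw [show (2 * j + 2) % (2 * m) = 2 * ((j + 1) % m) by rw [← Nat.mul_mod_mul_left]; ring_nf,
      interleave_two_mul, interleave_two_mul_add_one, h.periodic_vertex.map_mod_nat]
    exact ⟨(h.step j).2.2.1, (h.step j).2.2.2⟩

theorem IsAltClosedWalk.exists_shorter_of_interleave_eq (hT : IsTournamentOn n T)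
    (h : IsAltClosedWalk T m g w) {i j : ℕ} (hij : i < j) (hj : j < 2 * m)
    (he : interleave g w i = interleave g w j) :
    ∃ m' < m, ∃ g', IsClosedChain (AltStep T) m' g' := by
  obtain ⟨a, rfl | rfl⟩ := Nat.even_or_odd' i <;> obtain ⟨b, rfl | rfl⟩ := Nat.even_or_odd' j <;>
    simp only [interleave_two_mul, interleave_two_mul_add_one] at he
  · exact h.exists_shorter_of_vertex_eq (by omega) (by omega) he
  · rcases (show a ≤ b by omega).lt_or_eq with hab | rfl
    · exact h.exists_shorter_of_vertex_eq_witness hT hab (by omega) he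
    · exact absurd he (h.step a).2.1.ne'
  · rw [← h.periodic_witness] at he
    exact h.exists_shorter_of_vertex_eq_witness hT (by omega) (by omega) he.symm
  · exact h.exists_shorter_of_witness_eq (by omega) (by omega) he

theorem hasAltCycle_of_isClosedChain (hT : IsTournamentOn n T)
    (h : IsClosedChain (AltStep T) m g) : HasAltCycle n T := by
  induction m using Nat.strong_induction_on generalizing g with
  | _ m ih =>
  obtain ⟨w, hw⟩ := h.exists_isAltClosedWalk
  by_cases hinj : ∀ i < 2 * m, ∀ j < 2 * m, i ≠ j → interleave g w i ≠ interleave g w j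
  · refine hw.hasAltCycle hT ?_ hinj
    by_contra hm
    obtain rfl : m = 1 := by have := hw.pos; omega
    have hback := (hw.step 0).2.2.1
    rw [hw.periodic_vertex] at hback
    exact hT.asymm (hw.step 0).1 hback
  · simp only [not_forall, not_not] at hinj
    obtain ⟨i, hi, j, hj, hij, he⟩ := hinj
    obtain ⟨m', hm', g', hg'⟩ := hij.lt_or_gt.elim
      (fun hlt => hw.exists_shorter_of_interleave_eq hT hlt hj he)
      (fun hgt => hw.exists_shorter_of_interleave_eq hT hgt hi he.symm)
    exact ih m' hm' hg'

theorem AltAcyclic.not_transGen_altStep (hT : IsTournamentOn n T) (hA : AltAcyclic n T)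
    (v : ℕ) : ¬ TransGen (AltStep T) v v := fun h =>
  let ⟨_, _, hg⟩ := exists_isClosedChain_of_transGen_self h
  hA (hasAltCycle_of_isClosedChain hT hg)

end AltWalk

section Threshold

variable {α : Type*} {f : α → ℕ} {s : Finset α}

theorem lt_sup_succ_sub_half {a : α} (ha : a ∈ s) :
    (f a : ℝ) < (s.sup (f · + 1) : ℕ) - 1 / 2 := by
  have : f a + 1 ≤ s.sup (f · + 1) := Finset.le_sup (f := (f · + 1)) ha
  have : (f a : ℝ) + 1 ≤ (s.sup (f · + 1) : ℕ) := by exact_mod_cast this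
  linarith

theorem sup_succ_sub_half_lt {a : α} (h : ∀ b ∈ s, f b < f a) :
    ((s.sup (f · + 1) : ℕ) : ℝ) - 1 / 2 < f a := by
  have : s.sup (f · + 1) ≤ f a := Finset.sup_le h
  have : ((s.sup (f · + 1) : ℕ) : ℝ) ≤ f a := by exact_mod_cast this
  linarith

end Threshold

/-- Every alternation acyclic tournament `T` on `{1,…,n}`
arises from a region of the homogenized Linial arrangement: there are real
numbers `x 1, …, x n, y 1, …, y (n-1)` with `x i - y i ≠ x j` for all
`1 ≤ i < j ≤ n` such that for `i < j` the edge `i → j` is present exactly when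
`x i - y i > x j`, and the edge `j → i` exactly when `x i - y i < x j`. -/
theorem altAcyclic_is_region_tournament
    (n : ℕ) (T : ℕ → ℕ → Prop) (hT : IsTournamentOn n T) (hA : AltAcyclic n T) :
    ∃ x y : ℕ → ℝ,
      (∀ i j : ℕ, 1 ≤ i → i < j → j ≤ n → x i - y i ≠ x j) ∧
      (∀ i j : ℕ, 1 ≤ i → i < j → j ≤ n →
        (T i j ↔ x i - y i > x j) ∧ (T j i ↔ x i - y i < x j)) := by
  classical
  obtain ⟨f, hf⟩ := exists_rank_of_not_transGen_self (Finset.Icc 1 n)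
    (fun _ _ ⟨_, _, _, hT', _⟩ => (hT.1 _ _ hT').2.1) (hA.not_transGen_altStep hT)
  let z : ℕ → ℝ := fun i => (((Finset.Ioc i n).filter (T i)).sup (f · + 1) : ℕ) - 1 / 2
  have hasc : ∀ i j, i < j → j ≤ n → T i j → (f j : ℝ) < z i := fun i j hij hjn h =>
    lt_sup_succ_sub_half (by simp [hij, hjn, h])
  have hdesc : ∀ i j, i < j → T j i → z i < f j := fun i j hij h =>
    sup_succ_sub_half_lt fun k hk => by
      simp only [Finset.mem_filter, Finset.mem_Ioc] at hk
      exact hf j k ⟨i, h, hij, hk.2, hk.1.1⟩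
  refine ⟨fun j => f j, fun i => f i - z i, fun i j hi hij hjn => ?_, fun i j hi hij hjn => ?_⟩ <;>
    simp only [sub_sub_cancel] <;>
    rcases hT.total (u := i) (v := j) (by simp; omega) (by simp; omega) hij.ne with h | h
  · exact (hasc i j hij hjn h).ne'
  · exact (hdesc i j hij h).ne
  · exact ⟨iff_of_true h (hasc i j hij hjn h), iff_of_false (hT.asymm h) (hasc i j hij hjn h).not_gt⟩
  · exact ⟨iff_of_false (hT.asymm h) (hdesc i j hij h).not_gt, iff_of_true h (hdesc i j hij h)⟩
end

section
/- Let q be a prime and for n ≥ 1 and k ≥ 1 let χ(n,k,q) denote the number of tuples (x_1,…,x_n, y_1,…,y_n) ∈ F_q^{2n} such that x_i − y_i ≠ x_j for all 1 ≤ i < j ≤ n and the set {x_1 − y_1, …, x_n − y_n} has exactly k elements. Then χ(1,k,q) = q² if k = 1 and χ(1,k,q) = 0 otherwise, and for all n ≥ 2 the recurrence χ(n,k,q) = (q − k)·k·χ(n−1,k,q) + (q − k + 1)²·χ(n−1,k−1,q) holds (with the convention χ(n−1,0,q) = 0). -/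
/-- `chiHL q n k` is the number of tuples
`(x 1, …, x n, y 1, …, y n) ∈ F_q^{2n}` such that `x i - y i ≠ x j` for all
`i < j` (i.e. the point avoids all hyperplanes of the homogenized Linial
arrangement) and the set `{x 1 - y 1, …, x n - y n}` has exactly `k`
elements. -/
noncomputable def chiHL (q n k : ℕ) : ℕ :=
  Nat.card {xy : (Fin n → ZMod q) × (Fin n → ZMod q) //
    (∀ i j : Fin n, i < j → xy.1 i - xy.2 i ≠ xy.1 j) ∧
    (Finset.univ.image (fun i => xy.1 i - xy.2 i)).card = k}

/-!
Appending a last coordinate `(s, t)` to a point `(x, y)` of length `m` keeps it off the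
arrangement iff the old point is off it and `s` avoids the set `D` of differences `x i - y i`;
the new set of differences is `insert (s - t) D`. Under the shear `(s, t) ↦ (s, s - t)` the
admissible last coordinates form `Dᶜ × D` (when `|D| = k`) or `Dᶜ × Dᶜ` (when `|D| = k - 1`),
of sizes `(q - k) k` and `(q - k + 1)²`. The case `n = 1` is the recurrence from the empty point.
-/

open Finset Fintype

lemma sum_prod_snoc_snoc {α M : Type*} [Fintype α] [AddCommMonoid M] {m : ℕ}
    (f : (Fin (m + 1) → α) × (Fin (m + 1) → α) → M) :
    ∑ z, f z = ∑ b : (Fin m → α) × (Fin m → α), ∑ p : α × α,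
      f (Fin.snoc b.1 p.1, Fin.snoc b.2 p.2) := by
  rw [← Fintype.sum_prod_type']
  exact (Fintype.sum_equiv ((Equiv.prodComm _ _).trans ((Equiv.prodProdProdComm _ _ _ _).trans
    ((Fin.snocEquiv _).prodCongr (Fin.snocEquiv _)))) _ _ fun _ => rfl).symm

lemma natCast_card_filter_notMem {α : Type*} [Fintype α] [DecidableEq α] (D : Finset α) :
    (#{a | a ∉ D} : ℤ) = card α - #D := by
  rw [filter_notMem_eq_sdiff, card_univ_sdiff, Nat.cast_sub (card_le_univ D)]

lemma card_insert_eq_iff {α : Type*} [DecidableEq α] {a : α} {s : Finset α} {k : ℕ} :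
    #(insert a s) = k ↔ a ∈ s ∧ #s = k ∨ a ∉ s ∧ #s + 1 = k := by
  rw [card_insert_eq_ite]; split_ifs with h <;> simp [h]

section

variable {G : Type*} [AddCommGroup G]

lemma card_filter_fst_sub [Fintype G] (P Q : G → Prop) [DecidablePred P] [DecidablePred Q] :
    #{p : G × G | P p.1 ∧ Q (p.1 - p.2)} = #{s | P s} * #{d | Q d} := by
  rw [← card_product, ← univ_product_univ, ← filter_product]
  refine card_nbij' (fun p => (p.1, p.1 - p.2)) (fun p => (p.1, p.1 - p.2)) ?_ ?_ ?_ ?_ <;>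
    simp [Set.MapsTo, Set.LeftInvOn]

variable [DecidableEq G] {m n k : ℕ}

lemma card_filter_insert_sub [Fintype G] (D : Finset G) :
    (#{p : G × G | p.1 ∉ D ∧ #(insert (p.1 - p.2) D) = k} : ℤ) =
      (card G - k) * k * (if #D = k then 1 else 0) +
        (card G - k + 1) ^ 2 * (if #D + 1 = k then 1 else 0) := by
  simp only [card_insert_eq_iff]
  by_cases hk : #D = k
  · subst hk
    simp only [Nat.succ_ne_self, and_false, or_false, and_true, if_true, if_false]
    rw [card_filter_fst_sub (· ∉ D) (· ∈ D)]
    simp [natCast_card_filter_notMem]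
  by_cases hk' : #D + 1 = k
  · subst hk'
    simp only [hk, and_false, false_or, and_true, if_true, if_false]
    rw [card_filter_fst_sub (· ∉ D) (· ∉ D)]
    push_cast [natCast_card_filter_notMem]
    ring
  · simp [hk, hk']

def diffSet (x y : Fin n → G) : Finset G := univ.image fun i => x i - y i

def AvoidsLinial (x y : Fin n → G) : Prop := ∀ i j : Fin n, i < j → x i - y i ≠ x j

instance (x y : Fin n → G) : Decidable (AvoidsLinial x y) := by
  unfold AvoidsLinial; infer_instance

variable (G) in
noncomputable def linialCount (n k : ℕ) : ℕ :=
  Nat.card {xy : (Fin n → G) × (Fin n → G) // AvoidsLinial xy.1 xy.2 ∧ #(diffSet xy.1 xy.2) = k}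

lemma diffSet_snoc (x y : Fin m → G) (s t : G) :
    diffSet (Fin.snoc x s : Fin (m + 1) → G) (Fin.snoc y t) = insert (s - t) (diffSet x y) := by
  rw [diffSet, Fin.univ_castSuccEmb, cons_eq_insert, image_insert, map_eq_image, image_image]
  simp [diffSet, Function.comp_def]

lemma avoidsLinial_snoc_iff (x y : Fin m → G) (s t : G) :
    AvoidsLinial (Fin.snoc x s : Fin (m + 1) → G) (Fin.snoc y t) ↔
      AvoidsLinial x y ∧ s ∉ diffSet x y := by
  simp [AvoidsLinial, diffSet, Fin.forall_fin_succ', Fin.castSucc_lt_last, forall_and,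
    not_lt.2 (Fin.le_last _)]

variable [Fintype G]

lemma natCast_linialCount_eq_sum :
    (linialCount G n k : ℤ) = ∑ z : (Fin n → G) × (Fin n → G),
      if AvoidsLinial z.1 z.2 ∧ #(diffSet z.1 z.2) = k then 1 else 0 := by
  rw [linialCount, Nat.card_eq_fintype_card, Fintype.card_subtype, natCast_card_filter]

lemma linialCount_zero : linialCount G 0 k = if k = 0 then 1 else 0 := by
  rcases k with _ | k <;> simp [linialCount, diffSet, AvoidsLinial]

theorem linialCount_succ (hk : 1 ≤ k) :
    (linialCount G (m + 1) k : ℤ) = (card G - k) * k * linialCount G m k +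
      (card G - k + 1) ^ 2 * linialCount G m (k - 1) := by
  simp only [natCast_linialCount_eq_sum, sum_prod_snoc_snoc, avoidsLinial_snoc_iff, diffSet_snoc]
  calc _ = ∑ b : (Fin m → G) × (Fin m → G), if AvoidsLinial b.1 b.2 then
        (#{p : G × G | p.1 ∉ diffSet b.1 b.2 ∧ #(insert (p.1 - p.2) (diffSet b.1 b.2)) = k} : ℤ)
        else 0 := by
        refine sum_congr rfl fun b _ => ?_
        split_ifs with h
        · rw [natCast_card_filter]; simp [h]
        · simp [h]
    _ = ∑ b : (Fin m → G) × (Fin m → G),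
        (((card G : ℤ) - k) * k *
            (if AvoidsLinial b.1 b.2 ∧ #(diffSet b.1 b.2) = k then 1 else 0) +
          ((card G : ℤ) - k + 1) ^ 2 *
            (if AvoidsLinial b.1 b.2 ∧ #(diffSet b.1 b.2) = k - 1 then 1 else 0)) := by
        have hsucc : ∀ d : ℕ, d + 1 = k ↔ d = k - 1 := fun d => by omega
        refine sum_congr rfl fun b _ => ?_
        by_cases hA : AvoidsLinial b.1 b.2 <;> simp [hA, card_filter_insert_sub, hsucc]
    _ = _ := by simp only [sum_add_distrib, ← mul_sum]

lemma linialCount_one (hk : 1 ≤ k) : linialCount G 1 k = if k = 1 then card G ^ 2 else 0 := by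
  have h := linialCount_succ (G := G) (m := 0) hk
  rcases eq_or_ne k 1 with rfl | hk1
  · simp [linialCount_zero] at h
    exact_mod_cast h
  · have hk0 : k ≠ 0 := by omega
    have hk0' : k - 1 ≠ 0 := by omega
    simpa [linialCount_zero, hk0, hk0', hk1] using h

end

lemma chiHL_eq_linialCount (q n k : ℕ) : chiHL q n k = linialCount (ZMod q) n k := rfl

/-- For a prime `q`: `χ(1,k,q) = q²` if `k = 1` and `0`
otherwise, and for `n ≥ 2`, `k ≥ 1`,
`χ(n,k,q) = (q-k)·k·χ(n-1,k,q) + (q-k+1)²·χ(n-1,k-1,q)`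
(the convention `χ(n-1,0,q) = 0` holds automatically). -/
theorem chiHL_init_and_recurrence (q : ℕ) (hq : q.Prime) :
    (∀ k : ℕ, 1 ≤ k → chiHL q 1 k = if k = 1 then q ^ 2 else 0) ∧
    (∀ n k : ℕ, 2 ≤ n → 1 ≤ k →
      (chiHL q n k : ℤ) =
        ((q : ℤ) - k) * k * chiHL q (n - 1) k
          + ((q : ℤ) - k + 1) ^ 2 * chiHL q (n - 1) (k - 1)) := by
  have : NeZero q := ⟨hq.ne_zero⟩
  refine ⟨fun k hk => ?_, fun n k hn hk => ?_⟩
  · rw [chiHL_eq_linialCount, linialCount_one hk, ZMod.card]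
  · obtain ⟨m, rfl⟩ : ∃ m, n = m + 1 := ⟨n - 1, by omega⟩
    simpa only [chiHL_eq_linialCount, ZMod.card, Nat.add_sub_cancel] using
      linialCount_succ (G := ZMod q) (m := m) hk
end

section
/- Let (λ, p) be a code on {1,…,n}, let T = T(λ,p) be the tournament it induces, and let ⊑ be the right-alternating walk relation induced by T. Then the following are equivalent: (i) for each descent position i of λ (i.e., each i ∈ {1,…,n−1} with λ(i) > λ(i+1)), the vertex λ(i+1) belongs to the image p({1,…,n}); (ii) λ is the largest maximal order of T, i.e., for every k ∈ {1,…,n}, the vertex λ(k) is the largest element of {λ(1),…,λ(k)} among those that are maximal with respect to the restriction of ⊑ to {λ(1),…,λ(k)}. -/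
/-- A descent edge followed by an ascent edge strictly increases position;
moreover the intermediate parent value's position sits strictly between. -/
lemma step_pos_lt' (lam : Equiv.Perm ℕ) (p : ℕ → ℕ∞) {a b c : ℕ}
    (hd : CodeT lam p a b) (hba : b < a)
    (ha : CodeT lam p b c) (hbc : b < c) :
    ∃ m : ℕ, p b = (m : ℕ∞) ∧ lam.symm a < lam.symm m ∧ lam.symm m ≤ lam.symm c := by
  rcases ha with h | ⟨h1, _⟩
  · obtain ⟨_, m, hm, hmc⟩ := h
    rcases hd with h' | ⟨_, hn⟩
    · exact absurd h'.1 (by omega)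
    · refine ⟨m, hm, ?_, hmc⟩
      by_contra hle
      push_neg at hle
      exact hn ⟨hba, m, hm, hle⟩
  · omega

lemma step_pos_lt (lam : Equiv.Perm ℕ) (p : ℕ → ℕ∞) {a b c : ℕ}
    (hd : CodeT lam p a b) (hba : b < a)
    (ha : CodeT lam p b c) (hbc : b < c) :
    lam.symm a < lam.symm c := by
  obtain ⟨m, _, h1, h2⟩ := step_pos_lt' lam p hd hba ha hbc
  omega

/-- Positions of even-indexed vertices are monotone along the walk. -/
lemma chain_le (lam : Equiv.Perm ℕ) (p : ℕ → ℕ∞) {i : ℕ} (w : ℕ → ℕ)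
    (hd : ∀ j < i, CodeT lam p (w (2 * j)) (w (2 * j + 1)) ∧ w (2 * j + 1) < w (2 * j))
    (ha : ∀ j < i, CodeT lam p (w (2 * j + 1)) (w (2 * j + 2)) ∧
      w (2 * j + 1) < w (2 * j + 2)) (hi : 1 ≤ i) :
    lam.symm (w 2) ≤ lam.symm (w (2 * i)) := by
  induction i with
  | zero => omega
  | succ t ih =>
    rcases Nat.eq_or_lt_of_le hi with h1 | h1
    · norm_num [← h1]
    · have ht : 1 ≤ t := by omega
      have ih' := ih (fun j hj => hd j (by omega)) (fun j hj => ha j (by omega)) ht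
      have hstep : lam.symm (w (2 * t)) < lam.symm (w (2 * t + 2)) :=
        step_pos_lt lam p (hd t (by omega)).1 (hd t (by omega)).2
          (ha t (by omega)).1 (ha t (by omega)).2
      have he : 2 * (t + 1) = 2 * t + 2 := by ring
      rw [he]
      omega

/-- A nontrivial right-alternating walk strictly increases position. -/
lemma rawalk_lt (n : ℕ) (lam : Equiv.Perm ℕ) (p : ℕ → ℕ∞) {u v : ℕ}
    (h : RAWalk n (CodeT lam p) u v) (hne : u ≠ v) :
    lam.symm u < lam.symm v := by
  rcases h with rfl | ⟨i, hi, w, hw0, hwv, _, hd, ha⟩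
  · exact absurd rfl hne
  · have hd0 := hd 0 (by omega)
    have ha0 := ha 0 (by omega)
    norm_num at hd0 ha0
    have h02 : lam.symm (w 0) < lam.symm (w 2) :=
      step_pos_lt lam p hd0.1 hd0.2 ha0.1 ha0.2
    have h2i := chain_le lam p w hd ha hi
    rw [← hw0, ← hwv]
    omega

/-- Let `(λ, p)` be a code on `{1,…,n}`, `T = T(λ,p)` the
induced tournament, and `⊑` its right-alternating walk relation. Then the
following are equivalent: (i) for each descent position `i` of `λ`, the vertex
`λ (i+1)` belongs to the image `p({1,…,n})`; (ii) `λ` is the largest maximal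
order of `T`: for each `k`, the vertex `λ k` is the largest element among the
maximal elements of `{λ 1, …, λ k}` with respect to the restriction of `⊑`. -/
theorem largest_maximal_representation_characterization
    (n : ℕ) (lam : Equiv.Perm ℕ) (p : ℕ → ℕ∞)
    (hlam : ∀ i, i ∈ Finset.Icc 1 n ↔ lam i ∈ Finset.Icc 1 n)
    (hp : IsParent n p) :
    (∀ i ∈ Finset.Icc 1 (n - 1), lam (i + 1) < lam i →
        ∃ u ∈ Finset.Icc 1 n, p u = ((lam (i + 1) : ℕ) : ℕ∞)) ↔
    (∀ k ∈ Finset.Icc 1 n,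
        (∀ w ∈ (Finset.Icc 1 k).image (fun x => lam x),
           RAWalk n (CodeT lam p) (lam k) w → lam k = w) ∧
        (∀ v ∈ (Finset.Icc 1 k).image (fun x => lam x),
           (∀ w ∈ (Finset.Icc 1 k).image (fun x => lam x),
              RAWalk n (CodeT lam p) v w → v = w) →
           v ≤ lam k)) := by
  constructor
  · -- (i) → (ii)
    intro hi k hk
    rw [Finset.mem_Icc] at hk
    constructor
    · -- lam k is maximal
      intro w hw hwalk
      by_contra hne
      obtain ⟨x, hx, rfl⟩ := Finset.mem_image.mp hw
      rw [Finset.mem_Icc] at hx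
      have := rawalk_lt n lam p hwalk hne
      simp only [Equiv.symm_apply_apply] at this
      omega
    · -- maximal elements are at most lam k
      intro v hv hmax
      obtain ⟨j, hj, rfl⟩ := Finset.mem_image.mp hv
      rw [Finset.mem_Icc] at hj
      by_contra hgt
      push_neg at hgt
      -- lam k < lam j, j < k
      have hjk : j < k := by
        rcases Nat.lt_or_ge j k with h | h
        · exact h
        · have hjk' : j = k := by omega
          rw [hjk'] at hgt
          exact absurd hgt (lt_irrefl _)
      -- t : least index in (j, k] with lam t < lam j
      classical
      have hex : ∃ t, j < t ∧ t ≤ k ∧ lam t < lam j := ⟨k, hjk, le_refl k, hgt⟩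
      have hminex : ∃ t, (j < t ∧ t ≤ k ∧ lam t < lam j) ∧
          ∀ s < t, ¬ (j < s ∧ s ≤ k ∧ lam s < lam j) :=
        ⟨Nat.find hex, Nat.find_spec hex, fun s hs => Nat.find_min hex hs⟩
      obtain ⟨t, ⟨hjt, htk, hlt⟩, hmin⟩ := hminex
      -- descent at t - 1
      have ht1 : t - 1 + 1 = t := by omega
      have hdesc : lam t < lam (t - 1) := by
        rcases Nat.eq_or_lt_of_le (Nat.succ_le_of_lt hjt) with h | h
        · rw [show t - 1 = j by omega]; exact hlt
        · have hnP := hmin (t - 1) (by omega)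
          push_neg at hnP
          have h1 : lam j ≤ lam (t - 1) := hnP (by omega) (by omega)
          have h2 : lam (t - 1) ≠ lam j := fun he => by
            have := lam.injective he; omega
          omega
      have hmem : t - 1 ∈ Finset.Icc 1 (n - 1) := by
        rw [Finset.mem_Icc]; omega
      obtain ⟨u, hu, hpu⟩ := hi (t - 1) hmem (by rw [ht1]; exact hdesc)
      rw [ht1] at hpu
      -- u < lam t
      have hult : u < lam t := by
        have h1 := (hp u hu).1
        rw [hpu] at h1
        exact_mod_cast h1
      -- lam t ∈ Icc 1 n
      have htn : lam t ∈ Finset.Icc 1 n := (hlam t).mp (by rw [Finset.mem_Icc]; omega)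
      have hjn : lam j ∈ Finset.Icc 1 n := (hlam j).mp (by rw [Finset.mem_Icc]; omega)
      -- build the walk lam j → u → lam t
      have hwalk : RAWalk n (CodeT lam p) (lam j) (lam t) := by
        refine Or.inr ⟨1, le_refl 1,
          fun s => if s = 0 then lam j else if s = 1 then u else lam t, by norm_num,
          by norm_num, ?_, ?_, ?_⟩
        · intro s hs
          interval_cases s <;> simp [hu, htn, hjn]
        · intro jj hjj
          have : jj = 0 := by omega
          subst this
          norm_num
          refine ⟨Or.inr ⟨by omega, ?_⟩, by omega⟩
          rintro ⟨-, m, hm, hle⟩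
          rw [hpu] at hm
          have hmeq : lam t = m := by exact_mod_cast hm
          rw [← hmeq] at hle
          simp only [Equiv.symm_apply_apply] at hle
          omega
        · intro jj hjj
          have : jj = 0 := by omega
          subst this
          norm_num
          exact ⟨Or.inl ⟨hult, lam t, hpu, le_refl _⟩, hult⟩
      have := hmax (lam t) (Finset.mem_image.mpr ⟨t, Finset.mem_Icc.mpr ⟨by omega, htk⟩, rfl⟩) hwalk
      omega
  · -- (ii) → (i)
    intro hii i hi hdesc
    rw [Finset.mem_Icc] at hi
    have hk : i + 1 ∈ Finset.Icc 1 n := by rw [Finset.mem_Icc]; omega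
    obtain ⟨-, hle⟩ := hii (i + 1) hk
    have hvi : lam i ∈ (Finset.Icc 1 (i + 1)).image (fun x => lam x) :=
      Finset.mem_image.mpr ⟨i, Finset.mem_Icc.mpr ⟨hi.1, by omega⟩, rfl⟩
    -- lam i is not maximal
    have hnmax : ¬ (∀ w ∈ (Finset.Icc 1 (i + 1)).image (fun x => lam x),
        RAWalk n (CodeT lam p) (lam i) w → lam i = w) := by
      intro h
      have := hle (lam i) hvi h
      omega
    push_neg at hnmax
    obtain ⟨w, hw, hwalk, hne⟩ := hnmax
    obtain ⟨x, hx, rfl⟩ := Finset.mem_image.mp hw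
    rw [Finset.mem_Icc] at hx
    rcases hwalk with heq | ⟨ii, hii1, wf, hw0, hw2i, hmemw, hd, ha⟩
    · exact absurd heq hne
    · have hd0 := hd 0 (by omega)
      have ha0 := ha 0 (by omega)
      norm_num at hd0 ha0
      obtain ⟨m, hpm, hm1, hm2⟩ := step_pos_lt' lam p hd0.1 hd0.2 ha0.1 ha0.2
      have hchain := chain_le lam p wf hd ha hii1
      rw [hw0] at hm1
      simp only [Equiv.symm_apply_apply] at hm1
      rw [hw2i] at hchain
      simp only [Equiv.symm_apply_apply] at hchain
      have hmpos : lam.symm m = i + 1 := by omega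
      have hmeq : m = lam (i + 1) := by
        have := congrArg lam hmpos
        rwa [Equiv.apply_symm_apply] at this
      refine ⟨wf 1, hmemw 1 (by omega), ?_⟩
      rw [hpm, hmeq]
end

section
/- Let n ≥ 2 and let (λ, p) be a code on {1,…,n} such that for every descent position i of λ (λ(i) > λ(i+1)), the vertex λ(i+1) lies in the image of p. Define λ' to be the permutation of {1,…,n−1} obtained from the word λ(1)⋯λ(n) by deleting the letter n, and define p' : {1,…,n−1} → {2,…,n−1} ∪ {∞} by p'(i) = p(i) if p(i) ≠ n and p'(i) = ∞ if p(i) = n. Then (λ', p') is a code on {1,…,n−1} (i.e., p'(i) > i for all i), and for every descent position i of λ', the vertex λ'(i+1) lies in the image of p'. -/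
/-- Let `n ≥ 2` and let `(λ, p)` be a code on `{1,…,n}` such
that for every descent position `i` of `λ`, the vertex `λ (i+1)` lies in the
image of `p`. Let `λ'` be obtained from the word `λ 1 ⋯ λ n` by deleting the
letter `n` (so `λ' i = λ i` for `i < λ⁻¹ n` and `λ' i = λ (i+1)` otherwise),
and let `p' i = p i` if `p i ≠ n`, `p' i = ∞` if `p i = n`. Then `(λ', p')` is
a code on `{1,…,n-1}` and for every descent position `i` of `λ'`, the vertex
`λ' (i+1)` lies in the image of `p'`. -/
theorem reduction_preserves_largest_maximal
    (n : ℕ) (hn : 2 ≤ n) (lam : Equiv.Perm ℕ) (p : ℕ → ℕ∞)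
    (hlam : ∀ i, i ∈ Finset.Icc 1 n ↔ lam i ∈ Finset.Icc 1 n)
    (hp : IsParent n p)
    (hdesc : ∀ i ∈ Finset.Icc 1 (n - 1), lam (i + 1) < lam i →
      ∃ u ∈ Finset.Icc 1 n, p u = ((lam (i + 1) : ℕ) : ℕ∞))
    (lam' : ℕ → ℕ)
    (hlam' : ∀ i, lam' i = if i < lam.symm n then lam i else lam (i + 1))
    (p' : ℕ → ℕ∞)
    (hp' : ∀ i, p' i = if p i = ((n : ℕ) : ℕ∞) then ⊤ else p i) :
    Set.BijOn lam' (Set.Icc 1 (n - 1)) (Set.Icc 1 (n - 1)) ∧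
    IsParent (n - 1) p' ∧
    (∀ i ∈ Finset.Icc 1 (n - 2), lam' (i + 1) < lam' i →
      ∃ u ∈ Finset.Icc 1 (n - 1), p' u = ((lam' (i + 1) : ℕ) : ℕ∞)) := by
  have hn1 : (1:ℕ) ≤ n := by omega
  have hkn : lam (lam.symm n) = n := lam.apply_symm_apply n
  have hmem : ∀ i, 1 ≤ i → i ≤ n → 1 ≤ lam i ∧ lam i ≤ n := by
    intro i h1 h2
    have := (hlam i).mp (by simp [Finset.mem_Icc]; omega)
    simpa [Finset.mem_Icc] using this
  have hmem' : ∀ i, 1 ≤ lam i → lam i ≤ n → 1 ≤ i ∧ i ≤ n := by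
    intro i h1 h2
    have := (hlam i).mpr (by simp [Finset.mem_Icc]; omega)
    simpa [Finset.mem_Icc] using this
  set k := lam.symm n with hkdef
  have hk : 1 ≤ k ∧ k ≤ n := hmem' k (by rw [hkn]; omega) (by rw [hkn])
  have hne : ∀ i, i ≠ k → lam i ≠ n := by
    intro i hi h
    exact hi (lam.injective (by rw [h, hkn]))
  have hmaps : ∀ i, 1 ≤ i → i ≤ n - 1 → 1 ≤ lam' i ∧ lam' i ≤ n - 1 := by
    intro i h1 h2
    rw [hlam' i]
    split_ifs with h
    · have hm := hmem i (by omega) (by omega)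
      have := hne i (by omega)
      omega
    · have hm := hmem (i+1) (by omega) (by omega)
      have := hne (i+1) (by omega)
      omega
  refine ⟨⟨?_, ?_, ?_⟩, ?_, ?_⟩
  · intro a ha
    simp only [Set.mem_Icc] at ha ⊢
    exact hmaps a ha.1 ha.2
  · intro a ha b hb hab
    simp only [Set.mem_Icc] at ha hb
    rw [hlam' a, hlam' b] at hab
    split_ifs at hab with h1 h2 h2
    · exact lam.injective hab
    · have := lam.injective hab; omega
    · have := lam.injective hab; omega
    · have := lam.injective hab; omega
  · intro v hv
    simp only [Set.mem_Icc] at hv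
    have hjv : lam (lam.symm v) = v := lam.apply_symm_apply v
    set j := lam.symm v with hjdef
    have hj : 1 ≤ j ∧ j ≤ n := hmem' j (by omega) (by omega)
    have hjk : j ≠ k := by
      intro h; rw [h, hkn] at hjv; omega
    by_cases hc : j < k
    · refine ⟨j, by simp only [Set.mem_Icc]; omega, ?_⟩
      rw [hlam' j, if_pos hc, hjv]
    · refine ⟨j - 1, by simp only [Set.mem_Icc]; omega, ?_⟩
      rw [hlam' (j-1), if_neg (by omega)]
      have : j - 1 + 1 = j := by omega
      rw [this, hjv]
  · intro u hu
    simp only [Finset.mem_Icc] at hu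
    obtain ⟨h1, h2⟩ := hp u (by simp [Finset.mem_Icc]; omega)
    rw [hp' u]
    split_ifs with h
    · refine ⟨?_, ?_⟩
      · exact lt_of_lt_of_le h1 le_top
      · intro m hm; simp at hm
    · refine ⟨h1, fun m hm => ?_⟩
      have h3 := h2 m hm
      simp only [Finset.mem_Icc] at h3 ⊢
      have hmn : m ≠ n := by
        intro he; rw [he] at hm; exact h hm
      omega
  · intro i hi hdes
    simp only [Finset.mem_Icc] at hi
    have hli1 := hmaps (i+1) (by omega) (by omega)
    have key : ∀ j, 1 ≤ j → j ≤ n - 1 → lam (j+1) < lam j → lam (j+1) = lam' (i+1) →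
        ∃ u ∈ Finset.Icc 1 (n-1), p' u = ((lam' (i + 1) : ℕ) : ℕ∞) := by
      intro j hj1 hj2 hjd hje
      obtain ⟨u, hu, hpu⟩ := hdesc j (by simp [Finset.mem_Icc]; omega) hjd
      rw [hje] at hpu
      simp only [Finset.mem_Icc] at hu
      have hult := (hp u (by simp [Finset.mem_Icc]; omega)).1
      rw [hpu] at hult
      have hult' : u < lam' (i+1) := by exact_mod_cast hult
      have h2 : p u ≠ ((n:ℕ) : ℕ∞) := by
        rw [hpu]
        intro h
        have : lam' (i+1) = n := by exact_mod_cast h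
        omega
      refine ⟨u, by simp only [Finset.mem_Icc]; omega, ?_⟩
      rw [hp' u, if_neg h2, hpu]
    by_cases h1 : i + 1 < k
    · have e1 : lam' i = lam i := by rw [hlam' i, if_pos (by omega)]
      have e2 : lam' (i+1) = lam (i+1) := by rw [hlam' (i+1), if_pos h1]
      exact key i (by omega) (by omega) (by rw [← e1, ← e2]; exact hdes) e2.symm
    · have e2 : lam' (i+1) = lam (i+2) := by
        rw [hlam' (i+1), if_neg h1]
      by_cases h2 : i < k
      · -- k = i + 1
        have hk1 : lam (i+1) = n := by
          have : i + 1 = k := by omega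
          rw [this, hkn]
        have hm2 := hmem (i+2) (by omega) (by omega)
        have hne2 := hne (i+2) (by omega)
        exact key (i+1) (by omega) (by omega) (by show lam (i+2) < lam (i+1); omega) e2.symm
      · have e1 : lam' i = lam (i+1) := by rw [hlam' i, if_neg h2]
        exact key (i+1) (by omega) (by omega)
          (by show lam (i+2) < lam (i+1); rw [← e1, ← e2]; exact hdes) e2.symm
end

section
/- For all n ≥ 1, i ≥ 1 and j ≥ 0, the factorial j! divides A(n,i,j). -/
/-
Fix `p` and let `S` be its set of finite values on `{1,…,n}`; as `∞` is attained, `|S| = j`.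
Cut the one-line word of `λ` before each letter of `S`: this leaves a prefix free of `S`
followed by `j` blocks, each headed by its letter of `S`. The descent condition says that in
every adjacent pair `a b` with `b < a` the letter `b` lies in `S`; this always holds at the
junction of two blocks, so permuting the blocks preserves it. Permuting the blocks is a free
action of `S_j` on the pairs `(λ, p)`, hence `j!` divides their number.
-/

/-- `altA n i j` is the number `A(n,i,j)` of pairs `(λ, p)` where `λ` is a
permutation of `{1,…,n}` (extended by the identity on the rest of `ℕ`),
`p : {1,…,n} → {2,…,n} ∪ {∞}` satisfies `p k > k` for all `k` (extended by `∞`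
outside `{1,…,n}`), for every descent position `i₀` of `λ` the value
`λ (i₀+1)` lies in the image `p({1,…,n})`, exactly `i` elements of `{1,…,n}`
are sent to `∞` by `p`, and the image `p({1,…,n})` has exactly `j+1` elements
(including `∞`). These pairs are exactly the largest maximal representations of
alternation acyclic tournaments of type `(n,i,j)`. -/
noncomputable def altA (n i j : ℕ) : ℕ :=
  Nat.card {lp : Equiv.Perm ℕ × (ℕ → ℕ∞) //
    (∀ x, x ∉ Finset.Icc 1 n → lp.1 x = x) ∧
    (∀ x, x ∉ Finset.Icc 1 n → lp.2 x = ⊤) ∧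
    (∀ u ∈ Finset.Icc 1 n, (u : ℕ∞) < lp.2 u ∧
      ∀ m : ℕ, lp.2 u = (m : ℕ∞) → m ∈ Finset.Icc 2 n) ∧
    (∀ i₀ ∈ Finset.Icc 1 (n - 1), lp.1 (i₀ + 1) < lp.1 i₀ →
      ∃ u ∈ Finset.Icc 1 n, lp.2 u = ((lp.1 (i₀ + 1) : ℕ) : ℕ∞)) ∧
    {u : ℕ | u ∈ Finset.Icc 1 n ∧ lp.2 u = ⊤}.ncard = i ∧
    ((fun u => lp.2 u) '' Set.Icc 1 n).ncard = j + 1}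

theorem MulAction.card_dvd_card_of_free {G X : Type*} [Group G] [MulAction G X]
    (hfree : ∀ (g : G) (x : X), g • x = x → g = 1) : Nat.card G ∣ Nat.card X := by
  rw [Nat.card_congr (MulAction.selfEquivOrbitsQuotientProd fun x =>
    (Subgroup.eq_bot_iff_forall _).2 fun g hg => hfree g x hg), Nat.card_prod]
  exact dvd_mul_left _ _

theorem List.countP_eq_ncard {α : Type*} {P : α → Prop} [DecidablePred P] {w : List α}
    (hw : w.Nodup) (hP : ∀ x, P x → x ∈ w) : w.countP P = {x | P x}.ncard := by
  classical
  have : {x | P x} = ↑(w.filter P).toFinset := by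
    ext x
    simpa using fun h => hP x h
  rw [this, Set.ncard_coe_finset, List.toFinset_card_of_nodup (hw.filter _),
    List.countP_eq_length_filter]

theorem ENat.ncard_preimage_coe_add_one {T : Set ℕ∞} (hT : T.Finite) (htop : ⊤ ∈ T) :
    ((↑) ⁻¹' T : Set ℕ).ncard + 1 = T.ncard := by
  have hT' : T = insert ⊤ ((↑) '' ((↑) ⁻¹' T : Set ℕ)) := by
    ext x
    induction x <;> simp [htop]
  conv_rhs => rw [hT']
  rw [Set.ncard_insert_of_notMem (by simp) ((hT.preimage Nat.cast_injective.injOn).image _),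
    Set.ncard_image_of_injective _ Nat.cast_injective]

namespace List

variable {α : Type*} (P : α → Prop)

def IsBlock (b : List α) : Prop := ∃ a t, b = a :: t ∧ P a ∧ ∀ x ∈ t, ¬P x

variable {P} in
theorem isChain_append_flatten_iff {R : α → α → Prop} (hR : ∀ a b, P b → R a b)
    {B : List α} {bs : List (List α)} (hbs : ∀ b ∈ bs, IsBlock P b) :
    IsChain R (B ++ bs.flatten) ↔ IsChain R B ∧ ∀ b ∈ bs, IsChain R b := by
  induction bs generalizing B with
  | nil => simp
  | cons b bs ih =>
    obtain ⟨a, t, rfl, ha, -⟩ := hbs _ mem_cons_self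
    rw [flatten_cons, ← append_assoc, ih fun b hb => hbs b (mem_cons_of_mem _ hb),
      isChain_append]
    simp [hR _ _ ha, and_assoc]

variable [DecidablePred P]

def splitBlocks : List α → List α × List (List α)
  | [] => ([], [])
  | a :: t =>
    if P a then ([], (a :: (splitBlocks t).1) :: (splitBlocks t).2)
    else (a :: (splitBlocks t).1, (splitBlocks t).2)

variable {P}

theorem splitBlocks_cons_of_pos {a : α} (h : P a) (t : List α) :
    splitBlocks P (a :: t) = ([], (a :: (splitBlocks P t).1) :: (splitBlocks P t).2) :=
  if_pos h

theorem splitBlocks_cons_of_neg {a : α} (h : ¬P a) (t : List α) :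
    splitBlocks P (a :: t) = (a :: (splitBlocks P t).1, (splitBlocks P t).2) :=
  if_neg h

variable (P) in
theorem fst_splitBlocks_append_flatten (w : List α) :
    (splitBlocks P w).1 ++ (splitBlocks P w).2.flatten = w := by
  induction w with
  | nil => rfl
  | cons a t ih =>
    by_cases h : P a
    · rw [splitBlocks_cons_of_pos h]; simpa using ih
    · rw [splitBlocks_cons_of_neg h]; simpa using ih

theorem not_of_mem_fst_splitBlocks {w : List α} {x : α} (hx : x ∈ (splitBlocks P w).1) :
    ¬P x := by
  induction w with
  | nil => simp [splitBlocks] at hx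
  | cons a t ih =>
    by_cases h : P a
    · rw [splitBlocks_cons_of_pos h] at hx
      simp at hx
    · rw [splitBlocks_cons_of_neg h] at hx
      rcases mem_cons.1 hx with rfl | hx
      exacts [h, ih hx]

theorem isBlock_of_mem_snd_splitBlocks {w : List α} {b : List α}
    (hb : b ∈ (splitBlocks P w).2) : IsBlock P b := by
  induction w with
  | nil => simp [splitBlocks] at hb
  | cons a t ih =>
    by_cases h : P a
    · rw [splitBlocks_cons_of_pos h] at hb
      rcases mem_cons.1 hb with rfl | hb
      exacts [⟨a, _, rfl, h, fun _ => not_of_mem_fst_splitBlocks⟩, ih hb]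
    · rw [splitBlocks_cons_of_neg h] at hb
      exact ih hb

variable (P) in
theorem length_snd_splitBlocks (w : List α) : (splitBlocks P w).2.length = w.countP P := by
  induction w with
  | nil => rfl
  | cons a t ih =>
    by_cases h : P a
    · rw [splitBlocks_cons_of_pos h]; simp [ih, h]
    · rw [splitBlocks_cons_of_neg h]; simp [ih, h]

theorem nodup_snd_splitBlocks {w : List α} (hw : w.Nodup) : (splitBlocks P w).2.Nodup := by
  rw [← fst_splitBlocks_append_flatten P w, nodup_append] at hw
  refine (nodup_flatten.1 hw.2.1).2.imp_of_mem fun {b c} hb _ hbc hEq => ?_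
  obtain ⟨a, t, rfl, -, -⟩ := isBlock_of_mem_snd_splitBlocks hb
  exact hbc mem_cons_self (hEq ▸ mem_cons_self)

theorem splitBlocks_append {B : List α} (hB : ∀ x ∈ B, ¬P x) (w : List α) :
    splitBlocks P (B ++ w) = (B ++ (splitBlocks P w).1, (splitBlocks P w).2) := by
  induction B with
  | nil => rfl
  | cons a t ih =>
    rw [cons_append, splitBlocks_cons_of_neg (hB a mem_cons_self),
      ih fun x hx => hB x (mem_cons_of_mem _ hx)]
    rfl

theorem splitBlocks_append_flatten {B : List α} {bs : List (List α)}
    (hB : ∀ x ∈ B, ¬P x) (hbs : ∀ b ∈ bs, IsBlock P b) :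
    splitBlocks P (B ++ bs.flatten) = (B, bs) := by
  rw [splitBlocks_append hB]
  suffices splitBlocks P bs.flatten = ([], bs) by simp [this]
  induction bs with
  | nil => rfl
  | cons b bs ih =>
    obtain ⟨a, t, rfl, ha, ht⟩ := hbs _ mem_cons_self
    rw [flatten_cons, cons_append, splitBlocks_cons_of_pos ha, splitBlocks_append ht,
      ih fun b hb => hbs b (mem_cons_of_mem _ hb)]
    simp

section Rearrange

variable {β : Type*} {j : ℕ}

theorem ofFn_getD_eq_self {l : List β} (h : l.length = j) (d : β) :
    ofFn (fun k : Fin j => l.getD k d) = l := by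
  subst h
  simp

theorem ofFn_getD_perm {l : List β} (h : l.length = j) (σ : Equiv.Perm (Fin j)) (d : β) :
    ofFn (fun k => l.getD (σ k) d) ~ l := by
  have := σ.ofFn_comp_perm fun k => l.getD k d
  rwa [ofFn_getD_eq_self h] at this

/- Position `k` receives block `σ⁻¹ k` of `w`, which makes this a left action. It is only
meaningful when `w` has exactly `j` letters satisfying `P`; otherwise `getD` pads with `[]`. -/
variable (P) in
def rearrangeBlocks (σ : Equiv.Perm (Fin j)) (w : List α) : List α :=
  (splitBlocks P w).1 ++ (ofFn fun k => (splitBlocks P w).2.getD (σ⁻¹ k) []).flatten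

variable {w : List α} (hw : w.countP P = j)
include hw

theorem perm_ofFn_snd_splitBlocks (σ : Equiv.Perm (Fin j)) :
    (ofFn fun k => (splitBlocks P w).2.getD (σ⁻¹ k) []) ~ (splitBlocks P w).2 :=
  ofFn_getD_perm ((length_snd_splitBlocks P w).trans hw) σ⁻¹ []

theorem isBlock_of_mem_ofFn_snd_splitBlocks {σ : Equiv.Perm (Fin j)} {b : List α}
    (hb : b ∈ ofFn fun k => (splitBlocks P w).2.getD (σ⁻¹ k) []) : IsBlock P b :=
  isBlock_of_mem_snd_splitBlocks ((perm_ofFn_snd_splitBlocks hw σ).mem_iff.1 hb)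

theorem splitBlocks_rearrangeBlocks (σ : Equiv.Perm (Fin j)) :
    splitBlocks P (rearrangeBlocks P σ w) =
      ((splitBlocks P w).1, ofFn fun k => (splitBlocks P w).2.getD (σ⁻¹ k) []) :=
  splitBlocks_append_flatten (fun _ => not_of_mem_fst_splitBlocks)
    fun _ => isBlock_of_mem_ofFn_snd_splitBlocks hw

theorem rearrangeBlocks_mul (σ τ : Equiv.Perm (Fin j)) :
    rearrangeBlocks P (σ * τ) w = rearrangeBlocks P σ (rearrangeBlocks P τ w) := by
  conv_rhs => rw [rearrangeBlocks, splitBlocks_rearrangeBlocks hw]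
  simp [rearrangeBlocks]

theorem rearrangeBlocks_one : rearrangeBlocks P (1 : Equiv.Perm (Fin j)) w = w := by
  simp only [rearrangeBlocks, inv_one, Equiv.Perm.one_apply,
    ofFn_getD_eq_self ((length_snd_splitBlocks P w).trans hw)]
  exact fst_splitBlocks_append_flatten P w

theorem rearrangeBlocks_perm (σ : Equiv.Perm (Fin j)) : rearrangeBlocks P σ w ~ w := by
  conv_rhs => rw [← fst_splitBlocks_append_flatten P w]
  exact ((perm_ofFn_snd_splitBlocks hw σ).flatten).append_left _

theorem isChain_rearrangeBlocks_iff {R : α → α → Prop} (hR : ∀ a b, P b → R a b)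
    (σ : Equiv.Perm (Fin j)) : IsChain R (rearrangeBlocks P σ w) ↔ IsChain R w := by
  conv_rhs => rw [← fst_splitBlocks_append_flatten P w]
  rw [rearrangeBlocks,
    isChain_append_flatten_iff hR fun _ => isBlock_of_mem_ofFn_snd_splitBlocks hw,
    isChain_append_flatten_iff hR fun _ => isBlock_of_mem_snd_splitBlocks]
  simp only [(perm_ofFn_snd_splitBlocks hw σ).mem_iff]

theorem eq_one_of_rearrangeBlocks_eq (hnd : w.Nodup) {σ : Equiv.Perm (Fin j)}
    (h : rearrangeBlocks P σ w = w) : σ = 1 := by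
  have hlen := (length_snd_splitBlocks P w).trans hw
  have hblocks := congrArg (fun v => (splitBlocks P v).2) h
  simp only [splitBlocks_rearrangeBlocks hw] at hblocks
  conv_rhs at hblocks => rw [← ofFn_getD_eq_self hlen []]
  suffices σ⁻¹ = 1 from inv_eq_one.1 this
  ext k
  have := congrFun (ofFn_inj.1 hblocks) k
  rw [getD_eq_getElem _ _ (by simp [hlen]), getD_eq_getElem _ _ (by simp [hlen]),
    (nodup_snd_splitBlocks hnd).getElem_inj_iff] at this
  simpa using this

end Rearrange

end List

namespace Equiv.Perm

open List

theorem apply_mem_iff_of_forall_notMem {α : Type*} {l : Perm α} {s : Finset α}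
    (hl : ∀ x ∉ s, l x = x) (x : α) : l x ∈ s ↔ x ∈ s := by
  refine ⟨fun h => ?_, fun h => ?_⟩
  · by_contra hx
    exact hx (hl x hx ▸ h)
  · by_contra hlx
    exact hlx (by rwa [l.injective (hl _ hlx)])

def oneLine (n : ℕ) (l : Perm ℕ) : List ℕ := (range' 1 n).map l

variable {n : ℕ}

theorem oneLine_perm_range' {l : Perm ℕ} (hl : ∀ x ∉ Finset.Icc 1 n, l x = x) :
    oneLine n l ~ range' 1 n := by
  refine (perm_ext_iff_of_nodup (Nodup.map l.injective nodup_range') nodup_range').2 fun y => ?_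
  have hmem := l.apply_mem_iff_of_forall_notMem hl
  simp only [Finset.mem_Icc] at hmem
  simp only [mem_map, mem_range'_1]
  refine ⟨?_, fun hy => ⟨l.symm y, ?_, l.apply_symm_apply y⟩⟩
  · rintro ⟨x, hx, rfl⟩
    have := (hmem x).2 (by omega)
    omega
  · have := (hmem (l.symm y)).1 (by simp only [apply_symm_apply]; omega)
    omega

theorem eq_of_oneLine_eq {l l' : Perm ℕ} (hl : ∀ x ∉ Finset.Icc 1 n, l x = x)
    (hl' : ∀ x ∉ Finset.Icc 1 n, l' x = x) (h : oneLine n l = oneLine n l') : l = l' := by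
  ext x
  by_cases hx : x ∈ Finset.Icc 1 n
  · exact map_inj_left.1 h x (by simpa [Nat.lt_succ_iff, add_comm] using hx)
  · rw [hl x hx, hl' x hx]

theorem exists_oneLine_eq {w : List ℕ} (hw : w ~ range' 1 n) :
    ∃ l : Perm ℕ, (∀ x ∉ Finset.Icc 1 n, l x = x) ∧ oneLine n l = w := by
  have hlen : w.length = n := by simpa using hw.length_eq
  have hnd : w.Nodup := hw.nodup_iff.2 nodup_range'
  have hmem : ∀ y, y ∈ w ↔ y ∈ Finset.Icc 1 n := fun y => by
    rw [hw.mem_iff, mem_range'_1, Finset.mem_Icc]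
    omega
  obtain ⟨σ, hσ⟩ := exists_extending_pair (fun k : Fin n => k.1 + 1)
    (fun k => w[k.1]'(hlen ▸ k.2)) (fun a b h => Fin.ext (by simpa using h))
    (fun a b h => Fin.ext ((hnd.getElem_inj_iff).1 h))
  have hinv : ∀ x, σ x ∈ Finset.Icc 1 n ↔ x ∈ Finset.Icc 1 n := by
    intro x
    refine ⟨fun h => ?_, fun h => ?_⟩
    · obtain ⟨k, hk, hkx⟩ := mem_iff_getElem.1 ((hmem _).2 h)
      have hx : k + 1 = x := σ.injective ((hσ ⟨k, hlen ▸ hk⟩).trans hkx)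
      rw [Finset.mem_Icc]
      omega
    · rw [Finset.mem_Icc] at h
      have := hσ ⟨x - 1, by omega⟩
      simp only [Nat.sub_add_cancel h.1] at this
      exact this ▸ (hmem _).1 (getElem_mem _)
  refine ⟨ofSubtype (σ.subtypePerm hinv), fun x hx => ofSubtype_apply_of_not_mem _ hx, ?_⟩
  refine ext_getElem (by simp [oneLine, hlen]) fun k hk _ => ?_
  simp only [oneLine, getElem_map, getElem_range']
  rw [ofSubtype_apply_of_mem _ (by simp at hk ⊢; omega)]
  simpa [add_comm] using hσ ⟨k, by simpa [oneLine] using hk⟩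

variable (n) in
noncomputable def oneLineEquiv :
    {l : Perm ℕ // ∀ x ∉ Finset.Icc 1 n, l x = x} ≃ {w : List ℕ // w ~ range' 1 n} :=
  Equiv.ofBijective (fun l => ⟨oneLine n l, oneLine_perm_range' l.2⟩)
    ⟨fun l l' h => Subtype.ext (eq_of_oneLine_eq l.2 l'.2 (congrArg Subtype.val h)),
      fun w => let ⟨l, hl, h⟩ := exists_oneLine_eq w.2; ⟨⟨l, hl⟩, Subtype.ext h⟩⟩

theorem oneLine_oneLineEquiv_symm (w : {w : List ℕ // w ~ range' 1 n}) :
    oneLine n ((oneLineEquiv n).symm w).1 = w :=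
  congrArg Subtype.val ((oneLineEquiv n).apply_symm_apply w)

theorem isChain_oneLine_iff (R : ℕ → ℕ → Prop) (l : Perm ℕ) :
    IsChain R (oneLine n l) ↔ ∀ i₀ ∈ Finset.Icc 1 (n - 1), R (l i₀) (l (i₀ + 1)) := by
  rw [oneLine, isChain_map, isChain_iff_getElem]
  simp only [length_range', getElem_range', Finset.mem_Icc]
  constructor
  · intro h i₀ hi₀
    obtain ⟨i, rfl⟩ := Nat.exists_eq_add_of_le' hi₀.1
    simpa [add_comm] using h i (by omega)
  · intro h i hi
    simpa [add_comm] using h (i + 1) (by omega)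

end Equiv.Perm

namespace altA

open Equiv Perm List
open scoped Classical

def Pairs (n i j : ℕ) : Type :=
  {lp : Equiv.Perm ℕ × (ℕ → ℕ∞) //
    (∀ x, x ∉ Finset.Icc 1 n → lp.1 x = x) ∧
    (∀ x, x ∉ Finset.Icc 1 n → lp.2 x = ⊤) ∧
    (∀ u ∈ Finset.Icc 1 n, (u : ℕ∞) < lp.2 u ∧
      ∀ m : ℕ, lp.2 u = (m : ℕ∞) → m ∈ Finset.Icc 2 n) ∧
    (∀ i₀ ∈ Finset.Icc 1 (n - 1), lp.1 (i₀ + 1) < lp.1 i₀ →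
      ∃ u ∈ Finset.Icc 1 n, lp.2 u = ((lp.1 (i₀ + 1) : ℕ) : ℕ∞)) ∧
    {u : ℕ | u ∈ Finset.Icc 1 n ∧ lp.2 u = ⊤}.ncard = i ∧
    ((fun u => lp.2 u) '' Set.Icc 1 n).ncard = j + 1}

theorem eq_card_pairs (n i j : ℕ) : altA n i j = Nat.card (Pairs n i j) := rfl

def finiteValues (n : ℕ) (p : ℕ → ℕ∞) : Set ℕ := (↑) ⁻¹' (p '' Set.Icc 1 n)

theorem descents_iff_isChain_oneLine {n : ℕ} (l : Equiv.Perm ℕ) (p : ℕ → ℕ∞) :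
    (∀ i₀ ∈ Finset.Icc 1 (n - 1), l (i₀ + 1) < l i₀ →
      ∃ u ∈ Finset.Icc 1 n, p u = ((l (i₀ + 1) : ℕ) : ℕ∞)) ↔
    IsChain (fun a b => b < a → b ∈ finiteValues n p) (oneLine n l) := by
  rw [isChain_oneLine_iff]
  simp [finiteValues]

namespace Pairs

variable {n i j : ℕ}

theorem ext_oneLine {x y : Pairs n i j} (hl : oneLine n x.1.1 = oneLine n y.1.1)
    (hp : x.1.2 = y.1.2) : x = y :=
  Subtype.ext (Prod.ext (eq_of_oneLine_eq x.2.1 y.2.1 hl) hp)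

theorem ncard_finiteValues (hi : 1 ≤ i) (x : Pairs n i j) :
    (finiteValues n x.1.2).ncard = j := by
  obtain ⟨-, -, -, -, hinf, himage⟩ := x.2
  have htop : ⊤ ∈ x.1.2 '' Set.Icc 1 n := by
    obtain ⟨u, hu, hpu⟩ := Set.nonempty_of_ncard_ne_zero (hinf.trans_ne (by omega))
    exact ⟨u, by simpa using hu, hpu⟩
  have := ENat.ncard_preimage_coe_add_one ((Set.finite_Icc 1 n).image _) htop
  rw [himage] at this
  exact Nat.add_right_cancel this

theorem countP_oneLine (hi : 1 ≤ i) (x : Pairs n i j) :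
    (oneLine n x.1.1).countP (· ∈ finiteValues n x.1.2) = j := by
  have hperm := oneLine_perm_range' x.2.1
  rw [List.countP_eq_ncard (hperm.nodup_iff.2 nodup_range'), Set.ofPred_mem_eq,
    ncard_finiteValues hi x]
  rintro m ⟨u, hu, hpu⟩
  have := (x.2.2.2.1 u (by simpa using hu)).2 m hpu
  rw [hperm.mem_iff, mem_range'_1]
  simp only [Finset.mem_Icc] at this
  omega

theorem isChain_oneLine (x : Pairs n i j) :
    IsChain (fun a b => b < a → b ∈ finiteValues n x.1.2) (oneLine n x.1.1) :=
  (descents_iff_isChain_oneLine _ _).1 x.2.2.2.2.1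

noncomputable def withOneLine (x : Pairs n i j) (w : List ℕ) (hperm : w ~ range' 1 n)
    (hchain : IsChain (fun a b => b < a → b ∈ finiteValues n x.1.2) w) : Pairs n i j :=
  ⟨(((oneLineEquiv n).symm ⟨w, hperm⟩).1, x.1.2), by
    obtain ⟨-, hout, hvalues, -, hinf, himage⟩ := x.2
    refine ⟨((oneLineEquiv n).symm ⟨w, hperm⟩).2, hout, hvalues, ?_, hinf, himage⟩
    rwa [descents_iff_isChain_oneLine, oneLine_oneLineEquiv_symm]⟩

theorem oneLine_withOneLine (x : Pairs n i j) (w : List ℕ) (hperm : w ~ range' 1 n)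
    (hchain : IsChain (fun a b => b < a → b ∈ finiteValues n x.1.2) w) :
    oneLine n (x.withOneLine w hperm hchain).1.1 = w :=
  oneLine_oneLineEquiv_symm ⟨w, hperm⟩

noncomputable def rearrange (hi : 1 ≤ i) (σ : Perm (Fin j)) (x : Pairs n i j) : Pairs n i j :=
  x.withOneLine (rearrangeBlocks (· ∈ finiteValues n x.1.2) σ (oneLine n x.1.1))
    ((rearrangeBlocks_perm (countP_oneLine hi x) σ).trans (oneLine_perm_range' x.2.1))
    ((isChain_rearrangeBlocks_iff (countP_oneLine hi x)
      (R := fun a b => b < a → b ∈ finiteValues n x.1.2) (fun _ _ hb _ => hb) σ).2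
      (isChain_oneLine x))

theorem oneLine_rearrange (hi : 1 ≤ i) (σ : Perm (Fin j)) (x : Pairs n i j) :
    oneLine n (rearrange hi σ x).1.1 =
      rearrangeBlocks (· ∈ finiteValues n x.1.2) σ (oneLine n x.1.1) :=
  oneLine_withOneLine ..

@[reducible]
noncomputable def mulAction (hi : 1 ≤ i) : MulAction (Perm (Fin j)) (Pairs n i j) where
  smul := rearrange hi
  one_smul x := ext_oneLine
    ((oneLine_rearrange hi 1 x).trans (rearrangeBlocks_one (countP_oneLine hi x))) rfl
  mul_smul σ τ x := ext_oneLine (by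
    show oneLine n (rearrange hi (σ * τ) x).1.1 =
      oneLine n (rearrange hi σ (rearrange hi τ x)).1.1
    rw [oneLine_rearrange, oneLine_rearrange, oneLine_rearrange,
      rearrangeBlocks_mul (countP_oneLine hi x)]
    rfl) rfl

theorem eq_one_of_rearrange_eq (hi : 1 ≤ i) {σ : Perm (Fin j)} {x : Pairs n i j}
    (h : rearrange hi σ x = x) : σ = 1 := by
  have : oneLine n (rearrange hi σ x).1.1 = oneLine n x.1.1 := by rw [h]
  rw [oneLine_rearrange] at this
  exact eq_one_of_rearrangeBlocks_eq (countP_oneLine hi x)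
    ((oneLine_perm_range' x.2.1).nodup_iff.2 nodup_range') this

end Pairs

end altA

theorem factorial_dvd_altA_general (n i j : ℕ) (hi : 1 ≤ i) :
    Nat.factorial j ∣ altA n i j := by
  let _ := altA.Pairs.mulAction (n := n) (j := j) hi
  calc Nat.factorial j = Nat.card (Equiv.Perm (Fin j)) := by simp [Fintype.card_perm]
    _ ∣ Nat.card (altA.Pairs n i j) :=
      MulAction.card_dvd_card_of_free fun _ _ => altA.Pairs.eq_one_of_rearrange_eq hi
    _ = altA n i j := (altA.eq_card_pairs n i j).symm

/-- For all `n ≥ 1`, `i ≥ 1` and `j ≥ 0`, the factorial `j!`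
divides `A(n,i,j)`. -/
theorem factorial_dvd_altA (n i j : ℕ) (hn : 1 ≤ n) (hi : 1 ≤ i) :
    Nat.factorial j ∣ altA n i j :=
  factorial_dvd_altA_general n i j hi
end

section
/- For every n ≥ 1 there is a bijection Φ from the set of all permutations π of {1,…,n} to the set of all excedant functions f : {1,…,n} → {1,…,n} (i.e., functions with f(i) ≥ i for all i), such that for every permutation π and every k ∈ {1,…,n}: k does not belong to the image of Φ(π) if and only if there is a descent position i of π (i.e., π(i) > π(i+1)) with π(i+1) = k. -/
open Finset

namespace DSC

/-- Positions after `σ.symm k` (strictly) holding a value `> k`, bounded by `n`. -/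
def NLB (n : ℕ) (σ : Equiv.Perm ℕ) (k : ℕ) : Set ℕ :=
  {j | k < σ j ∧ σ.symm k < j ∧ j ≤ n}

/-- Positions holding a value `> k`, bounded by `n`. -/
def ALL (n : ℕ) (σ : Equiv.Perm ℕ) (k : ℕ) : Set ℕ :=
  {j | k < σ j ∧ j ≤ n}

/-- "no larger value before `k`". -/
def FirstC (σ : Equiv.Perm ℕ) (k : ℕ) : Prop := ∀ j < σ.symm k, σ j < k

open scoped Classical in
noncomputable def code (n : ℕ) (σ : Equiv.Perm ℕ) (k : ℕ) : ℕ :=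
  if k ∈ Finset.Icc 1 n then
    if FirstC σ k then k
    else σ (sInf (if (NLB n σ k).Nonempty then NLB n σ k else ALL n σ k))
  else 0

section
variable {n : ℕ} {σ : Equiv.Perm ℕ}

lemma code_of_notMem {k : ℕ} (hk : k ∉ Finset.Icc 1 n) : code n σ k = 0 := by
  simp [code, hk]

lemma code_of_firstC {k : ℕ} (hk : k ∈ Finset.Icc 1 n) (h : FirstC σ k) :
    code n σ k = k := by simp [code, hk, h]

lemma code_of_not_firstC {k : ℕ} (hk : k ∈ Finset.Icc 1 n) (h : ¬ FirstC σ k) :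
    code n σ k = σ (sInf (open scoped Classical in
      if (NLB n σ k).Nonempty then NLB n σ k else ALL n σ k)) := by
  simp [code, hk, h]

variable (hσ : ∀ x, x ∉ Finset.Icc 1 n → σ x = x)
include hσ

lemma fix_mem {x : ℕ} (hx : x ∈ Finset.Icc 1 n) : σ x ∈ Finset.Icc 1 n := by
  by_contra h
  have e : σ x = x := σ.injective (hσ _ h)
  rw [e] at h; exact h hx

lemma fix_symm (x : ℕ) (hx : x ∉ Finset.Icc 1 n) : σ.symm x = x :=
  (Equiv.symm_apply_eq σ).2 (hσ x hx).symm

lemma fix_symm_mem {x : ℕ} (hx : x ∈ Finset.Icc 1 n) : σ.symm x ∈ Finset.Icc 1 n := by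
  by_contra h
  have e : σ.symm x = x := σ.symm.injective (fix_symm hσ _ h)
  rw [e] at h; exact h hx

lemma not_firstC_witness {k : ℕ} (hk : k ∈ Finset.Icc 1 n) (h : ¬ FirstC σ k) :
    ∃ j, j ∈ Finset.Icc 1 n ∧ j < σ.symm k ∧ k < σ j := by
  simp only [FirstC, not_forall, not_lt] at h
  obtain ⟨j, hj, hkj⟩ := h
  have hne : σ j ≠ k := by
    intro e
    have : σ.symm k = j := by rw [← e, Equiv.symm_apply_apply]
    omega
  have hklt : k < σ j := lt_of_le_of_ne hkj (Ne.symm hne)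
  have hk1 : 1 ≤ k := (Finset.mem_Icc.1 hk).1
  have hjn : j < n := lt_of_lt_of_le hj (Finset.mem_Icc.1 (fix_symm_mem hσ hk)).2
  have hjm : j ∈ Finset.Icc 1 n := by
    by_contra hj'
    have := hσ j hj'
    rw [this] at hklt
    exact hj' (Finset.mem_Icc.2 ⟨le_trans hk1 hklt.le, hjn.le⟩)
  exact ⟨j, hjm, hj, hklt⟩

lemma all_nonempty {k : ℕ} (hk : k ∈ Finset.Icc 1 n) (h : ¬ FirstC σ k) :
    (ALL n σ k).Nonempty := by
  obtain ⟨j, hjm, hj, hklt⟩ := not_firstC_witness hσ hk h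
  exact ⟨j, hklt, (Finset.mem_Icc.1 hjm).2⟩

omit hσ in
lemma code_pos_of_nlb {k : ℕ} (hk : k ∈ Finset.Icc 1 n) (h : ¬ FirstC σ k)
    (hne : (NLB n σ k).Nonempty) :
    σ.symm (code n σ k) ∈ NLB n σ k ∧ ∀ j ∈ NLB n σ k, σ.symm (code n σ k) ≤ j := by
  have : code n σ k = σ (sInf (NLB n σ k)) := by
    rw [code_of_not_firstC hk h]
    congr 1
    rw [if_pos hne]
  rw [this, Equiv.symm_apply_apply]
  exact ⟨Nat.sInf_mem hne, fun j hj => Nat.sInf_le hj⟩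

lemma code_pos_of_nlb_empty {k : ℕ} (hk : k ∈ Finset.Icc 1 n) (h : ¬ FirstC σ k)
    (hemp : ¬ (NLB n σ k).Nonempty) :
    σ.symm (code n σ k) ∈ ALL n σ k ∧ ∀ j ∈ ALL n σ k, σ.symm (code n σ k) ≤ j := by
  have : code n σ k = σ (sInf (ALL n σ k)) := by
    rw [code_of_not_firstC hk h]
    congr 1
    rw [if_neg hemp]
  rw [this, Equiv.symm_apply_apply]
  exact ⟨Nat.sInf_mem (all_nonempty hσ hk h), fun j hj => Nat.sInf_le hj⟩

lemma code_spec {k : ℕ} (hk : k ∈ Finset.Icc 1 n) :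
    k ≤ code n σ k ∧ code n σ k ∈ Finset.Icc 1 n := by
  by_cases h : FirstC σ k
  · rw [code_of_firstC hk h]; exact ⟨le_rfl, hk⟩
  · have hmem : σ.symm (code n σ k) ∈ ALL n σ k := by
      by_cases hne : (NLB n σ k).Nonempty
      · obtain ⟨⟨h1, _, h3⟩, _⟩ := code_pos_of_nlb hk h hne
        exact ⟨h1, h3⟩
      · exact (code_pos_of_nlb_empty hσ hk h hne).1
    obtain ⟨h1, h3⟩ := hmem
    rw [Equiv.apply_symm_apply] at h1
    have hk1 : 1 ≤ k := (Finset.mem_Icc.1 hk).1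
    refine ⟨h1.le, ?_⟩
    have hjm : σ.symm (code n σ k) ∈ Finset.Icc 1 n := by
      by_contra hj'
      have e : σ (σ.symm (code n σ k)) = σ.symm (code n σ k) := hσ _ hj'
      rw [Equiv.apply_symm_apply] at e
      rw [← e] at h3 hj'
      exact hj' (Finset.mem_Icc.2 ⟨le_trans hk1 h1.le, h3⟩)
    have := fix_mem hσ hjm
    rwa [Equiv.apply_symm_apply] at this

lemma code_eq_self_iff {k : ℕ} (hk : k ∈ Finset.Icc 1 n) :
    code n σ k = k ↔ FirstC σ k := by
  constructor
  · intro hc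
    by_contra h
    have hmem : k < code n σ k := by
      by_cases hne : (NLB n σ k).Nonempty
      · have := (code_pos_of_nlb hk h hne).1.1
        rwa [Equiv.apply_symm_apply] at this
      · have := (code_pos_of_nlb_empty hσ hk h hne).1.1
        rwa [Equiv.apply_symm_apply] at this
    omega
  · exact code_of_firstC hk

lemma firstC_iff {k : ℕ} (hk : k ∈ Finset.Icc 1 n) :
    FirstC σ k ↔ ∀ w ∈ Finset.Icc 1 n, k < w → σ.symm k < σ.symm w := by
  constructor
  · intro h w hw hkw
    rcases lt_trichotomy (σ.symm k) (σ.symm w) with h1 | h1 | h1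
    · exact h1
    · exact absurd (σ.symm.injective h1) (Nat.ne_of_gt hkw).symm
    · have := h _ h1
      rw [Equiv.apply_symm_apply] at this
      omega
  · intro h j hj
    by_contra hge
    push_neg at hge
    have hne : σ j ≠ k := by
      intro e
      have : σ.symm k = j := by rw [← e, Equiv.symm_apply_apply]
      omega
    have hklt : k < σ j := lt_of_le_of_ne hge (Ne.symm hne)
    have hk1 : 1 ≤ k := (Finset.mem_Icc.1 hk).1
    have hjn : j < n := lt_of_lt_of_le hj (Finset.mem_Icc.1 (fix_symm_mem hσ hk)).2
    have hjm : j ∈ Finset.Icc 1 n := by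
      by_contra hj'
      have := hσ j hj'
      rw [this] at hklt
      exact hj' (Finset.mem_Icc.2 ⟨le_trans hk1 hklt.le, hjn.le⟩)
    have := h _ (fix_mem hσ hjm) hklt
    rw [Equiv.symm_apply_apply] at this
    omega

lemma db_iff {k : ℕ} (hk : k ∈ Finset.Icc 1 n) :
    (∃ i ∈ Finset.Icc 1 (n - 1), σ (i + 1) < σ i ∧ σ (i + 1) = k) ↔
      2 ≤ σ.symm k ∧ k < σ (σ.symm k - 1) := by
  have hqn : σ.symm k ∈ Finset.Icc 1 n := fix_symm_mem hσ hk
  rw [Finset.mem_Icc] at hqn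
  constructor
  · rintro ⟨i, hi, hlt, he⟩
    rw [Finset.mem_Icc] at hi
    have hq : σ.symm k = i + 1 := by rw [← he, Equiv.symm_apply_apply]
    constructor
    · omega
    · rw [hq]
      simpa [he] using hlt
  · rintro ⟨h2, hda⟩
    refine ⟨σ.symm k - 1, ?_, ?_, ?_⟩
    · rw [Finset.mem_Icc]; omega
    · have : σ.symm k - 1 + 1 = σ.symm k := by omega
      rw [this, Equiv.apply_symm_apply]
      exact hda
    · have : σ.symm k - 1 + 1 = σ.symm k := by omega
      rw [this, Equiv.apply_symm_apply]

lemma not_in_image_of_db {k : ℕ} (hk : k ∈ Finset.Icc 1 n)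
    (h2 : 2 ≤ σ.symm k) (hda : k < σ (σ.symm k - 1)) :
    ∀ m ∈ Finset.Icc 1 n, code n σ m ≠ k := by
  intro m hm hc
  have hqn : σ.symm k ∈ Finset.Icc 1 n := fix_symm_mem hσ hk
  rw [Finset.mem_Icc] at hqn
  rcases lt_trichotomy m k with hmk | rfl | hkm
  · -- m < k
    have hnf : ¬ FirstC σ m := by
      intro hf
      have : code n σ m = m := code_of_firstC hm hf
      omega
    have hpos : σ.symm (code n σ m) = σ.symm k := by rw [hc]
    have hqk : σ.symm k - 1 ≠ σ.symm m := by
      intro e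
      have : σ (σ.symm k - 1) = m := by rw [e, Equiv.apply_symm_apply]
      omega
    by_cases hne : (NLB n σ m).Nonempty
    · obtain ⟨hmem, hmin⟩ := code_pos_of_nlb hm hnf hne
      rw [hpos] at hmem hmin
      obtain ⟨_, hlt, _⟩ := hmem
      have hmem' : σ.symm k - 1 ∈ NLB n σ m := ⟨by omega, by omega, by omega⟩
      have := hmin _ hmem'
      omega
    · obtain ⟨hmem, hmin⟩ := code_pos_of_nlb_empty hσ hm hnf hne
      rw [hpos] at hmem hmin
      have hmem' : σ.symm k - 1 ∈ ALL n σ m := ⟨by omega, by omega⟩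
      have := hmin _ hmem'
      omega
  · -- m = k
    have hf : FirstC σ m := (code_eq_self_iff hσ hm).1 hc
    have := hf (σ.symm m - 1) (by omega)
    omega
  · -- k < m
    have := (code_spec hσ hm).1
    omega

lemma in_image_of_not_db {k : ℕ} (hk : k ∈ Finset.Icc 1 n)
    (hnd : ¬ (2 ≤ σ.symm k ∧ k < σ (σ.symm k - 1))) :
    ∃ m ∈ Finset.Icc 1 n, code n σ m = k := by
  by_cases hf : FirstC σ k
  · exact ⟨k, hk, code_of_firstC hk hf⟩
  obtain ⟨j, hjm, hj, hklt⟩ := not_firstC_witness hσ hk hf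
  rw [Finset.mem_Icc] at hjm
  have hqn : σ.symm k ∈ Finset.Icc 1 n := fix_symm_mem hσ hk
  rw [Finset.mem_Icc] at hqn
  have h2 : 2 ≤ σ.symm k := by omega
  have hane : σ (σ.symm k - 1) ≠ k := by
    intro e
    have : σ.symm k - 1 = σ.symm k := by
      apply σ.injective
      rw [e, Equiv.apply_symm_apply]
    omega
  have ham : σ (σ.symm k - 1) < k := by
    rcases Nat.lt_or_ge (σ (σ.symm k - 1)) k with h | h
    · exact h
    · exact absurd ⟨h2, lt_of_le_of_ne h (Ne.symm hane)⟩ hnd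
  set m := σ (σ.symm k - 1) with hmdef
  have hq1m : (σ.symm k - 1) ∈ Finset.Icc 1 n := Finset.mem_Icc.2 (by omega)
  have hmI : m ∈ Finset.Icc 1 n := fix_mem hσ hq1m
  have hposm : σ.symm m = σ.symm k - 1 := by rw [hmdef, Equiv.symm_apply_apply]
  have hjq1 : j ≠ σ.symm k - 1 := by
    intro e
    rw [e] at hklt
    omega
  have hnfm : ¬ FirstC σ m := by
    intro hfm
    have := hfm j (by omega)
    omega
  have hqNLB : σ.symm k ∈ NLB n σ m := by
    refine ⟨?_, by omega, by omega⟩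
    rw [Equiv.apply_symm_apply]
    omega
  obtain ⟨hmem, hmin⟩ := code_pos_of_nlb hmI hnfm ⟨_, hqNLB⟩
  have h1 := hmin _ hqNLB
  obtain ⟨_, hgt, _⟩ := hmem
  have : σ.symm (code n σ m) = σ.symm k := by omega
  refine ⟨m, hmI, ?_⟩
  have := congrArg σ this
  rwa [Equiv.apply_symm_apply, Equiv.apply_symm_apply] at this

lemma nlb_min_facts {k : ℕ} (hk : k ∈ Finset.Icc 1 n) (hf : ¬ FirstC σ k)
    (hne : (NLB n σ k).Nonempty) :
    σ.symm k < σ.symm (code n σ k) ∧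
      ∀ w ∈ Finset.Icc 1 n, k < w → σ.symm k < σ.symm w →
        σ.symm (code n σ k) ≤ σ.symm w := by
  obtain ⟨hmem, hmin⟩ := code_pos_of_nlb hk hf hne
  refine ⟨hmem.2.1, fun w hw hkw hlt => hmin _ ?_⟩
  refine ⟨?_, hlt, (Finset.mem_Icc.1 (fix_symm_mem hσ hw)).2⟩
  rw [Equiv.apply_symm_apply]; exact hkw

lemma all_min_facts {k : ℕ} (hk : k ∈ Finset.Icc 1 n) (hf : ¬ FirstC σ k)
    (hemp : ¬ (NLB n σ k).Nonempty) :
    (∀ w ∈ Finset.Icc 1 n, k < w → ¬ (σ.symm k < σ.symm w)) ∧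
      ∀ w ∈ Finset.Icc 1 n, k < w → σ.symm (code n σ k) ≤ σ.symm w := by
  obtain ⟨hmem, hmin⟩ := code_pos_of_nlb_empty hσ hk hf hemp
  constructor
  · intro w hw hkw hlt
    refine hemp ⟨σ.symm w, ?_, hlt, (Finset.mem_Icc.1 (fix_symm_mem hσ hw)).2⟩
    rw [Equiv.apply_symm_apply]; exact hkw
  · intro w hw hkw
    refine hmin _ ⟨?_, (Finset.mem_Icc.1 (fix_symm_mem hσ hw)).2⟩
    rw [Equiv.apply_symm_apply]; exact hkw

lemma exists_before {k : ℕ} (hk : k ∈ Finset.Icc 1 n) (hf : ¬ FirstC σ k) :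
    ∃ w ∈ Finset.Icc 1 n, k < w ∧ σ.symm w < σ.symm k := by
  obtain ⟨j, hjI, hjlt, hjval⟩ := not_firstC_witness hσ hk hf
  refine ⟨σ j, fix_mem hσ hjI, hjval, ?_⟩
  rw [Equiv.symm_apply_apply]; exact hjlt

lemma ord_step {τ : Equiv.Perm ℕ} (hτ : ∀ x, x ∉ Finset.Icc 1 n → τ x = x)
    (hcode : ∀ x, code n σ x = code n τ x) (k : ℕ)
    (IH : ∀ v w, v ∈ Finset.Icc 1 n → w ∈ Finset.Icc 1 n → k < v → k < w →
      (σ.symm v < σ.symm w ↔ τ.symm v < τ.symm w)) :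
    ∀ v w, v ∈ Finset.Icc 1 n → w ∈ Finset.Icc 1 n → k ≤ v → k ≤ w →
      (σ.symm v < σ.symm w ↔ τ.symm v < τ.symm w) := by
  have key : k ∈ Finset.Icc 1 n → ∀ w ∈ Finset.Icc 1 n, k < w →
      (σ.symm k < σ.symm w ↔ τ.symm k < τ.symm w) := by
    intro hk
    by_cases hf : FirstC σ k
    · have hfτ : FirstC τ k := by
        have : code n τ k = k := by rw [← hcode]; exact code_of_firstC hk hf
        exact (code_eq_self_iff hτ hk).1 this
      intro w hw hkw
      exact iff_of_true ((firstC_iff hσ hk).1 hf w hw hkw)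
        ((firstC_iff hτ hk).1 hfτ w hw hkw)
    · have hfτ : ¬ FirstC τ k := by
        intro hfτ
        have : code n σ k = k := by rw [hcode]; exact code_of_firstC hk hfτ
        exact hf ((code_eq_self_iff hσ hk).1 this)
      have hbτ : code n τ k = code n σ k := (hcode k).symm
      have hbI : code n σ k ∈ Finset.Icc 1 n := (code_spec hσ hk).2
      have hkb : k < code n σ k :=
        lt_of_le_of_ne (code_spec hσ hk).1
          (fun e => hf ((code_eq_self_iff hσ hk).1 e.symm))
      by_cases hne : (NLB n σ k).Nonempty <;> by_cases hne' : (NLB n τ k).Nonempty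
      · -- both nonempty
        obtain ⟨hσ1, hσ2⟩ := nlb_min_facts hσ hk hf hne
        obtain ⟨hτ1, hτ2⟩ := nlb_min_facts hτ hk hfτ hne'
        rw [hbτ] at hτ1 hτ2
        intro w hw hkw
        have hIH := IH _ w hbI hw hkb hkw
        have hIH2 := IH w _ hw hbI hkw hkb
        constructor
        · intro h
          have h1 := hσ2 w hw hkw h
          -- τ.symm code ≤ τ.symm w, then τ.symm k < τ.symm code ≤ τ.symm w
          omega
        · intro h
          have h1 := hτ2 w hw hkw h
          omega
      · -- σ nonempty, τ empty
        exfalso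
        obtain ⟨hσ1, _⟩ := nlb_min_facts hσ hk hf hne
        obtain ⟨_, hτ2⟩ := all_min_facts hτ hk hfτ hne'
        rw [hbτ] at hτ2
        obtain ⟨w₀, hw₀I, hkw₀, hw₀lt⟩ := exists_before hσ hk hf
        have h1 : σ.symm w₀ < σ.symm (code n σ k) := by omega
        have h2 := (IH w₀ _ hw₀I hbI hkw₀ hkb).1 h1
        have h3 := hτ2 w₀ hw₀I hkw₀
        omega
      · -- σ empty, τ nonempty
        exfalso
        obtain ⟨hτ1, _⟩ := nlb_min_facts hτ hk hfτ hne'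
        rw [hbτ] at hτ1
        obtain ⟨_, hσ2⟩ := all_min_facts hσ hk hf hne
        obtain ⟨w₀, hw₀I, hkw₀, hw₀lt⟩ := exists_before hτ hk hfτ
        have h1 : τ.symm w₀ < τ.symm (code n σ k) := by omega
        have h2 := (IH w₀ _ hw₀I hbI hkw₀ hkb).2 h1
        have h3 := hσ2 w₀ hw₀I hkw₀
        omega
      · -- both empty
        obtain ⟨hσ1, _⟩ := all_min_facts hσ hk hf hne
        obtain ⟨hτ1, _⟩ := all_min_facts hτ hk hfτ hne'
        intro w hw hkw
        exact iff_of_false (hσ1 w hw hkw) (hτ1 w hw hkw)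
  intro v w hv hw hkv hkw
  rcases hkv.eq_or_lt with rfl | hkv'
  · rcases hkw.eq_or_lt with rfl | hkw'
    · simp
    · exact key hv w hw hkw'
  · rcases hkw.eq_or_lt with rfl | hkw'
    · have hiff := key hw v hv hkv'
      have e1 : σ.symm k ≠ σ.symm v := fun e => Nat.ne_of_gt hkv' (σ.symm.injective e).symm
      have e2 : τ.symm k ≠ τ.symm v := fun e => Nat.ne_of_gt hkv' (τ.symm.injective e).symm
      omega
    · exact IH v w hv hw hkv' hkw'

lemma rank_eq {v : ℕ} (hv : v ∈ Finset.Icc 1 n) :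
    ((Finset.Icc 1 n).filter (fun w => σ.symm w ≤ σ.symm v)).card = σ.symm v := by
  have himg : (Finset.Icc 1 n).filter (fun w => σ.symm w ≤ σ.symm v) =
      (Finset.Icc 1 (σ.symm v)).image σ := by
    ext w
    simp only [Finset.mem_filter, Finset.mem_image, Finset.mem_Icc]
    constructor
    · rintro ⟨hwI, hle⟩
      refine ⟨σ.symm w, ⟨(Finset.mem_Icc.1 (fix_symm_mem hσ (Finset.mem_Icc.2 hwI))).1, hle⟩, ?_⟩
      rw [Equiv.apply_symm_apply]
    · rintro ⟨j, ⟨hj1, hj2⟩, rfl⟩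
      have hjI : j ∈ Finset.Icc 1 n :=
        Finset.mem_Icc.2 ⟨hj1, hj2.trans (Finset.mem_Icc.1 (fix_symm_mem hσ hv)).2⟩
      have := fix_mem hσ hjI
      rw [Finset.mem_Icc] at this
      exact ⟨this, by rw [Equiv.symm_apply_apply]; exact hj2⟩
  rw [himg, Finset.card_image_of_injective _ σ.injective, Nat.card_Icc]
  have : 1 ≤ σ.symm v := (Finset.mem_Icc.1 (fix_symm_mem hσ hv)).1
  omega

lemma code_injective {τ : Equiv.Perm ℕ} (hτ : ∀ x, x ∉ Finset.Icc 1 n → τ x = x)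
    (hcode : ∀ x, code n σ x = code n τ x) : σ = τ := by
  have main : ∀ j v w, v ∈ Finset.Icc 1 n → w ∈ Finset.Icc 1 n →
      n + 1 - j ≤ v → n + 1 - j ≤ w → (σ.symm v < σ.symm w ↔ τ.symm v < τ.symm w) := by
    intro j
    induction j with
    | zero =>
      intro v w hv hw hv' hw'
      rw [Finset.mem_Icc] at hv
      omega
    | succ j ihj =>
      by_cases hj : j ≤ n
      · have e : n + 1 - j = (n + 1 - (j + 1)) + 1 := by omega
        rw [e] at ihj
        exact ord_step hσ hτ hcode (n + 1 - (j + 1)) (fun v w hv hw h1 h2 =>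
          ihj v w hv hw h1 h2)
      · have e : n + 1 - j = n + 1 - (j + 1) := by omega
        rw [e] at ihj
        exact ihj
  have ord := main (n + 1)
  simp only [Nat.sub_self] at ord
  have posEq : ∀ v ∈ Finset.Icc 1 n, σ.symm v = τ.symm v := by
    intro v hv
    have h1 := rank_eq hσ hv
    have h2 := rank_eq hτ hv
    have hfe : (Finset.Icc 1 n).filter (fun w => σ.symm w ≤ σ.symm v) =
        (Finset.Icc 1 n).filter (fun w => τ.symm w ≤ τ.symm v) := by
      apply Finset.filter_congr
      intro w hw
      have := ord v w hv hw (Nat.zero_le _) (Nat.zero_le _)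
      have := ord w v hw hv (Nat.zero_le _) (Nat.zero_le _)
      constructor <;> intro <;> omega
    rw [hfe, h2] at h1
    exact h1.symm
  apply Equiv.ext
  intro x
  by_cases hx : x ∈ Finset.Icc 1 n
  · have hσx : σ x ∈ Finset.Icc 1 n := fix_mem hσ hx
    have := posEq _ hσx
    rw [Equiv.symm_apply_apply] at this
    have := congrArg τ this
    rw [Equiv.apply_symm_apply] at this
    exact this.symm
  · rw [hσ x hx, hτ x hx]

end

lemma prod_reflect (n : ℕ) : ∏ i ∈ Finset.Icc 1 n, (n + 1 - i) = Nat.factorial n := by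
  have h : ∏ i ∈ Finset.Icc 1 n, (n + 1 - i) = ∏ i ∈ Finset.Icc 1 n, i := by
    apply Finset.prod_nbij' (fun i => n + 1 - i) (fun i => n + 1 - i)
    · intro a ha; rw [Finset.mem_Icc] at *; omega
    · intro a ha; rw [Finset.mem_Icc] at *; omega
    · intro a ha; rw [Finset.mem_Icc] at ha; omega
    · intro a ha; rw [Finset.mem_Icc] at ha; omega
    · intro a ha; rfl
  rw [h, ← Finset.Ico_add_one_right_eq_Icc, Finset.prod_Ico_id_eq_factorial]

/-- The excedant-function subtype is equivalent to a dependent product. -/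
def excEquiv (n : ℕ) :
    {f : ℕ → ℕ //
      (∀ x ∈ Finset.Icc 1 n, x ≤ f x ∧ f x ∈ Finset.Icc 1 n) ∧
      (∀ x, x ∉ Finset.Icc 1 n → f x = 0)} ≃
    ((i : {x // x ∈ Finset.Icc 1 n}) → {y // y ∈ Finset.Icc i.1 n}) where
  toFun f i := ⟨f.1 i.1, by
    obtain ⟨h1, h2⟩ := f.2.1 i.1 i.2
    rw [Finset.mem_Icc] at h2 ⊢
    exact ⟨h1, h2.2⟩⟩
  invFun g := ⟨fun x => if hx : x ∈ Finset.Icc 1 n then (g ⟨x, hx⟩).1 else 0, by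
    constructor
    · intro x hx
      have h2 := (g ⟨x, hx⟩).2
      rw [Finset.mem_Icc] at h2
      have hx' := Finset.mem_Icc.1 hx
      have hc : (g ⟨x, hx⟩).1 ∈ Finset.Icc 1 n :=
        Finset.mem_Icc.2 ⟨le_trans hx'.1 h2.1, h2.2⟩
      simp only [dif_pos hx]
      exact ⟨h2.1, hc⟩
    · intro x hx
      show (if hx : x ∈ Finset.Icc 1 n then (g ⟨x, hx⟩).1 else 0) = 0
      rw [dif_neg hx]⟩
  left_inv f := Subtype.ext (funext fun x => by
    by_cases hx : x ∈ Finset.Icc 1 n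
    · exact dif_pos hx
    · exact (dif_neg hx).trans (f.2.2 x hx).symm)
  right_inv g := funext fun i => Subtype.ext (dif_pos i.2)

end DSC

/-- For every `n ≥ 1` there is a bijection `Φ` from the set of
permutations of `{1,…,n}` (modeled as permutations of `ℕ` fixing everything
outside `{1,…,n}`) to the set of excedant functions `f : {1,…,n} → {1,…,n}`
(functions with `i ≤ f i`, normalized to vanish outside `{1,…,n}`) such that
for every permutation `π` and every `k ∈ {1,…,n}`: `k` does not belong to the
image of `Φ π` if and only if there is a descent position `i` of `π` with
`π (i+1) = k`. -/
theorem exists_descent_sensitive_code (n : ℕ) (hn : 1 ≤ n) :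
    ∃ Φ : {σ : Equiv.Perm ℕ // ∀ x, x ∉ Finset.Icc 1 n → σ x = x} ≃
          {f : ℕ → ℕ //
            (∀ x ∈ Finset.Icc 1 n, x ≤ f x ∧ f x ∈ Finset.Icc 1 n) ∧
            (∀ x, x ∉ Finset.Icc 1 n → f x = 0)},
      ∀ (σ : {σ : Equiv.Perm ℕ // ∀ x, x ∉ Finset.Icc 1 n → σ x = x})
        (k : ℕ), k ∈ Finset.Icc 1 n →
        ((¬ ∃ x ∈ Finset.Icc 1 n, (Φ σ).1 x = k) ↔
          ∃ i ∈ Finset.Icc 1 (n - 1), σ.1 (i + 1) < σ.1 i ∧ σ.1 (i + 1) = k) := by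
  classical
  set D := {σ : Equiv.Perm ℕ // ∀ x, x ∉ Finset.Icc 1 n → σ x = x} with hD
  set E := {f : ℕ → ℕ //
      (∀ x ∈ Finset.Icc 1 n, x ≤ f x ∧ f x ∈ Finset.Icc 1 n) ∧
      (∀ x, x ∉ Finset.Icc 1 n → f x = 0)} with hE
  let Φ₀ : D → E := fun σ =>
    ⟨DSC.code n σ.1,
      fun x hx => DSC.code_spec σ.2 hx,
      fun x hx => DSC.code_of_notMem hx⟩
  have hinj : Function.Injective Φ₀ := by
    intro σ τ h
    apply Subtype.ext
    exact DSC.code_injective σ.2 τ.2 (fun x => congrFun (congrArg Subtype.val h) x)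
  have e1 : D ≃ Equiv.Perm {x // x ∈ Finset.Icc 1 n} :=
    (Equiv.Perm.subtypeEquivSubtypePerm (· ∈ Finset.Icc 1 n)).symm
  have e2 := DSC.excEquiv n
  haveI : Finite E := Finite.of_equiv _ e2.symm
  letI fI : Fintype {x // x ∈ Finset.Icc 1 n} := Finset.Subtype.fintype _
  letI fI2 : ∀ i : {x // x ∈ Finset.Icc 1 n}, Fintype {y // y ∈ Finset.Icc i.1 n} :=
    fun _ => Finset.Subtype.fintype _
  have hcard : Nat.card D = Nat.card E := by
    rw [Nat.card_congr e1, Nat.card_congr e2]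
    rw [Nat.card_eq_fintype_card, Nat.card_eq_fintype_card]
    rw [Fintype.card_perm, Fintype.card_pi]
    have hc1 : Fintype.card {x // x ∈ Finset.Icc 1 n} = n := by
      rw [Fintype.card_coe, Nat.card_Icc]; omega
    rw [hc1]
    have hc2 : ∀ i : {x // x ∈ Finset.Icc 1 n},
        Fintype.card {y // y ∈ Finset.Icc i.1 n} = n + 1 - i.1 := by
      intro i
      rw [Fintype.card_coe, Nat.card_Icc]
    calc Nat.factorial n = ∏ i ∈ Finset.Icc 1 n, (n + 1 - i) := (DSC.prod_reflect n).symm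
      _ = ∏ i : {x // x ∈ Finset.Icc 1 n}, (n + 1 - i.1) := (Finset.prod_coe_sort _ _).symm
      _ = ∏ i : {x // x ∈ Finset.Icc 1 n}, Fintype.card {y // y ∈ Finset.Icc i.1 n} := by
          exact Finset.prod_congr rfl (fun i _ => (hc2 i).symm)
  have hbij : Function.Bijective Φ₀ :=
    (Nat.bijective_iff_injective_and_card Φ₀).2 ⟨hinj, hcard⟩
  refine ⟨Equiv.ofBijective Φ₀ hbij, ?_⟩
  intro σ k hk
  have happ : ∀ x, (Equiv.ofBijective Φ₀ hbij σ).1 x = DSC.code n σ.1 x := fun _ => rfl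
  simp only [happ]
  rw [DSC.db_iff σ.2 hk]
  constructor
  · intro hno
    by_contra hnd
    exact hno (DSC.in_image_of_not_db σ.2 hk hnd)
  · rintro ⟨h2, hda⟩ ⟨m, hm, hc⟩
    exact DSC.not_in_image_of_db σ.2 hk h2 hda m hm hc
end

section
/- For every n ≥ 1, the number of ordered pairs of integer vectors ((a_1,…,a_n), (b_1,…,b_n)) with 0 ≤ a_k ≤ k and 1 ≤ b_k ≤ k for all k ∈ {1,…,n} and with {a_1, b_1, …, a_n, b_n} ⊇ {1,…,n}, equals 2^n times the number of sequences of sets S_1, S_2, …, S_n such that each S_k is a nonempty subset of {1,…,k} with at most two elements and S_1 ∪ S_2 ∪ ⋯ ∪ S_n = {1,…,n}. (Consequently the latter count equals the normalized median Genocchi number h_n = H_{2n+1}/2^n.) -/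
/-!
Each pair `(a, b)` with `0 ≤ a ≤ k` and `1 ≤ b ≤ k` determines the set `{a, b} \ {0}`, a nonempty
subset of `{1, …, k}` with at most two elements, and each such set comes from exactly two pairs:
`{x, y}` with `x < y` from `(x, y)` and `(y, x)`, and `{x}` from `(0, x)` and `(x, x)`. The bit
`b ≤ a` tells the two apart. Since `{a₁, b₁, …, aₙ, bₙ} ⊇ {1, …, n}` says exactly that these
sets cover `{1, …, n}`, the pairs of vectors correspond to covering set sequences together with
`n` independent bits.
-/

open Finset

namespace MedianGenocchi

def supportedSubtypeEquivPi {ι α : Type*} [DecidableEq ι] (s : Finset ι) (z : α)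
    (P : ι → α → Prop) :
    {f : ι → α // (∀ i ∉ s, f i = z) ∧ ∀ i ∈ s, P i (f i)} ≃ ((i : s) → {x // P i x}) where
  toFun f i := ⟨f.1 i, f.2.2 i i.2⟩
  invFun g := ⟨fun i => if h : i ∈ s then g ⟨i, h⟩ else z, fun i hi => dif_neg hi,
    fun i hi => by simpa only [dif_pos hi] using (g ⟨i, hi⟩).2⟩
  left_inv f := Subtype.ext <| funext fun i => by
    by_cases hi : i ∈ s
    · simp [hi]
    · simp [hi, f.2.1 i hi]
  right_inv g := funext fun i => Subtype.ext <| by simp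

def subtypeSubtypeEquivSubtypeAnd {α : Type*} (p q r : α → Prop) :
    {x : {x // p x ∧ q x} // r x.1} ≃ {x // p x ∧ q x ∧ r x} :=
  (Equiv.subtypeSubtypeEquivSubtypeInter _ _).trans (Equiv.subtypeEquivRight fun _ => and_assoc)

theorem exists_eq_pair_of_card_le_two {α : Type*} [LinearOrder α] {s : Finset α}
    (hs : s.Nonempty) (h2 : s.card ≤ 2) : ∃ x y, x ≤ y ∧ s = {x, y} := by
  obtain h1 | h2 : s.card = 1 ∨ s.card = 2 := by have := hs.card_pos; omega
  · obtain ⟨x, rfl⟩ := card_eq_one.mp h1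
    exact ⟨x, x, le_rfl, by simp⟩
  · obtain ⟨x, y, -, rfl⟩ := card_eq_two.mp h2
    rcases le_total x y with hxy | hyx
    · exact ⟨x, y, hxy, rfl⟩
    · exact ⟨y, x, hyx, pair_comm x y⟩

def pairSet (p : ℕ × ℕ) : Finset ℕ := ({p.1, p.2} : Finset ℕ).erase 0

theorem mem_pairSet {m : ℕ} {p : ℕ × ℕ} : m ∈ pairSet p ↔ m ≠ 0 ∧ (p.1 = m ∨ p.2 = m) := by
  simp [pairSet, eq_comm]

theorem pairSet_zero_left {b : ℕ} (hb : b ≠ 0) : pairSet (0, b) = {b} := by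
  ext m; simp [mem_pairSet]; omega

theorem pairSet_of_ne_zero {a b : ℕ} (ha : a ≠ 0) (hb : b ≠ 0) : pairSet (a, b) = {a, b} := by
  ext m; simp [mem_pairSet]; omega

theorem pairSet_subset_Icc {k : ℕ} {p : ℕ × ℕ} (h1 : p.1 ≤ k) (h2 : p.2 ≤ k) :
    pairSet p ⊆ Icc 1 k := fun m hm => by
  rw [mem_pairSet] at hm
  rw [mem_Icc]
  omega

abbrev BoundedPair (k : ℕ) := {p : ℕ × ℕ // p.1 ≤ k ∧ 1 ≤ p.2 ∧ p.2 ≤ k}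

abbrev SmallSubset (k : ℕ) := {s : Finset ℕ // s ⊆ Icc 1 k ∧ s.Nonempty ∧ s.card ≤ 2}

def pairOfSmallSubset (s : Finset ℕ) (hs : s.Nonempty) (e : Bool) : ℕ × ℕ :=
  if e then (s.max' hs, s.min' hs)
  else (if s.min' hs = s.max' hs then 0 else s.min' hs, s.max' hs)

def boundedPairEquiv (k : ℕ) : BoundedPair k ≃ SmallSubset k × Bool where
  toFun p := (⟨pairSet p.1, pairSet_subset_Icc p.2.1 p.2.2.2,
      ⟨p.1.2, mem_pairSet.mpr ⟨by omega, Or.inr rfl⟩⟩,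
      card_erase_le.trans card_le_two⟩, decide (p.1.2 ≤ p.1.1))
  invFun q := ⟨pairOfSmallSubset q.1.1 q.1.2.2.1 q.2, by
    obtain ⟨⟨s, hsub, hne, -⟩, e⟩ := q
    have hmin := mem_Icc.mp (hsub (s.min'_mem hne))
    have hmax := mem_Icc.mp (hsub (s.max'_mem hne))
    cases e <;> simp only [pairOfSmallSubset] <;> (try split_ifs) <;> omega⟩
  left_inv := by
    rintro ⟨⟨a, b⟩, ha, hb1, hb2⟩
    apply Subtype.ext
    obtain rfl | ha0 := eq_or_ne a 0
    · simp [pairSet_zero_left (show b ≠ 0 by omega), pairOfSmallSubset]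
    · simp only [pairSet_of_ne_zero ha0 (show b ≠ 0 by omega)]
      rcases le_or_gt b a with hba | hab
      · simp [pairOfSmallSubset, hba]
      · simp [pairOfSmallSubset, hab.not_ge, hab.ne, hab.le]
  right_inv := by
    rintro ⟨⟨s, hsub, hne, hcard⟩, e⟩
    obtain ⟨x, y, hxy, rfl⟩ := exists_eq_pair_of_card_le_two hne hcard
    have hx0 : x ≠ 0 := by have := mem_Icc.mp (hsub (mem_insert_self x {y})); omega
    have hy0 : y ≠ 0 := by omega
    cases e
    · obtain rfl | hxy := eq_or_lt_of_le hxy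
      · simp [pairOfSmallSubset, pairSet_zero_left hx0, hx0]
      · simp [pairOfSmallSubset, pairSet_of_ne_zero hx0 hy0, hxy.ne, hxy.le, hxy.not_ge]
    · simp [pairOfSmallSubset, pairSet_of_ne_zero hy0 hx0, hxy, pair_comm]

variable (n : ℕ)

abbrev BoundedPairs := {ab : (ℕ → ℕ) × (ℕ → ℕ) //
  (∀ k, k ∉ Icc 1 n → ab.1 k = 0 ∧ ab.2 k = 0) ∧
  (∀ k ∈ Icc 1 n, ab.1 k ≤ k ∧ 1 ≤ ab.2 k ∧ ab.2 k ≤ k)}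

abbrev SmallSubsetSeqs := {S : ℕ → Finset ℕ //
  (∀ k, k ∉ Icc 1 n → S k = ∅) ∧
  (∀ k ∈ Icc 1 n, S k ⊆ Icc 1 k ∧ (S k).Nonempty ∧ (S k).card ≤ 2)}

def boundedPairsEquivPi : BoundedPairs n ≃ ((k : Icc 1 n) → BoundedPair k) :=
  ((Equiv.arrowProdEquivProdArrow ℕ (fun _ => ℕ) (fun _ => ℕ)).symm.subtypeEquiv
    (q := fun f => (∀ k ∉ Icc 1 n, f k = (0, 0)) ∧
      ∀ k ∈ Icc 1 n, (f k).1 ≤ k ∧ 1 ≤ (f k).2 ∧ (f k).2 ≤ k)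
    fun ab => by simp).trans
      (supportedSubtypeEquivPi (Icc 1 n) (0, 0) fun k p => p.1 ≤ k ∧ 1 ≤ p.2 ∧ p.2 ≤ k)

def boundedPairsEquiv : BoundedPairs n ≃ SmallSubsetSeqs n × (Icc 1 n → Bool) :=
  (boundedPairsEquivPi n).trans <|
    (Equiv.piCongrRight fun k : Icc 1 n => boundedPairEquiv k).trans <|
    (Equiv.arrowProdEquivProdArrow _ _ _).trans <|
      (supportedSubtypeEquivPi (Icc 1 n) ∅ fun k s =>
        s ⊆ Icc 1 k ∧ s.Nonempty ∧ s.card ≤ 2).symm.prodCongr (Equiv.refl _)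

theorem boundedPairsEquiv_apply_fst (ab : BoundedPairs n) (k : ℕ) :
    (boundedPairsEquiv n ab).1.1 k =
      if k ∈ Icc 1 n then pairSet (ab.1.1 k, ab.1.2 k) else ∅ :=
  rfl

theorem biUnion_boundedPairsEquiv_eq_Icc_iff (ab : BoundedPairs n) :
    (Icc 1 n).biUnion (boundedPairsEquiv n ab).1.1 = Icc 1 n ↔
      ∀ m ∈ Icc 1 n, ∃ k ∈ Icc 1 n, ab.1.1 k = m ∨ ab.1.2 k = m := by
  have hS : (Icc 1 n).biUnion (boundedPairsEquiv n ab).1.1 =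
      (Icc 1 n).biUnion fun k => pairSet (ab.1.1 k, ab.1.2 k) :=
    biUnion_congr rfl fun k hk => by rw [boundedPairsEquiv_apply_fst, if_pos hk]
  have hsub : ((Icc 1 n).biUnion fun k => pairSet (ab.1.1 k, ab.1.2 k)) ⊆ Icc 1 n :=
    biUnion_subset.mpr fun k hk =>
      have hb := ab.2.2 k hk
      (pairSet_subset_Icc hb.1 hb.2.2).trans (Icc_subset_Icc_right (mem_Icc.mp hk).2)
  rw [hS, Subset.antisymm_iff, and_iff_right hsub]
  refine forall₂_congr fun m hm => ?_
  have hm0 : m ≠ 0 := by grind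
  simp [mem_pairSet, hm0]

end MedianGenocchi

open MedianGenocchi

theorem card_pairs_eq_two_pow_mul_card_set_sequences_general (n : ℕ) :
    Nat.card {ab : (ℕ → ℕ) × (ℕ → ℕ) //
      (∀ k, k ∉ Finset.Icc 1 n → ab.1 k = 0 ∧ ab.2 k = 0) ∧
      (∀ k ∈ Finset.Icc 1 n, ab.1 k ≤ k ∧ 1 ≤ ab.2 k ∧ ab.2 k ≤ k) ∧
      (∀ m ∈ Finset.Icc 1 n, ∃ k ∈ Finset.Icc 1 n, ab.1 k = m ∨ ab.2 k = m)} =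
    2 ^ n *
      Nat.card {S : ℕ → Finset ℕ //
        (∀ k, k ∉ Finset.Icc 1 n → S k = ∅) ∧
        (∀ k ∈ Finset.Icc 1 n, S k ⊆ Finset.Icc 1 k ∧ (S k).Nonempty ∧ (S k).card ≤ 2) ∧
        (Finset.Icc 1 n).biUnion S = Finset.Icc 1 n} := by
  have pairs :
      {ab : BoundedPairs n // ∀ m ∈ Icc 1 n, ∃ k ∈ Icc 1 n, ab.1.1 k = m ∨ ab.1.2 k = m} ≃
      {S : SmallSubsetSeqs n // (Icc 1 n).biUnion S.1 = Icc 1 n} × (Icc 1 n → Bool) :=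
    ((boundedPairsEquiv n).subtypeEquiv fun ab =>
      (biUnion_boundedPairsEquiv_eq_Icc_iff n ab).symm).trans Equiv.prodSubtypeFstEquivSubtypeProd
  rw [← Nat.card_congr (subtypeSubtypeEquivSubtypeAnd _ _ _), Nat.card_congr pairs,
    ← Nat.card_congr (subtypeSubtypeEquivSubtypeAnd _ _ _), Nat.card_prod, Nat.card_fun,
    Nat.card_eq_fintype_card (α := Icc 1 n), Fintype.card_coe, Nat.card_Icc,
    Nat.card_eq_fintype_card (α := Bool), Fintype.card_bool,
    Nat.add_sub_cancel, mul_comm]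

/-- For every `n ≥ 1`, the number of ordered pairs of integer
vectors `((a 1,…,a n), (b 1,…,b n))` with `0 ≤ a k ≤ k` and `1 ≤ b k ≤ k` for
all `k ∈ {1,…,n}` and with `{a 1, b 1, …, a n, b n} ⊇ {1,…,n}`, equals `2^n`
times the number of sequences of sets `S 1, …, S n` where each `S k` is a
nonempty subset of `{1,…,k}` with at most two elements and
`S 1 ∪ ⋯ ∪ S n = {1,…,n}`. (Hence the latter count is the normalized median
Genocchi number `h_n = H_{2n+1}/2^n`.) Vectors are modeled as functions
`ℕ → ℕ` vanishing outside `{1,…,n}`, and set sequences as functions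
`ℕ → Finset ℕ` that are empty outside `{1,…,n}`. -/
theorem card_pairs_eq_two_pow_mul_card_set_sequences (n : ℕ) (hn : 1 ≤ n) :
    Nat.card {ab : (ℕ → ℕ) × (ℕ → ℕ) //
      (∀ k, k ∉ Finset.Icc 1 n → ab.1 k = 0 ∧ ab.2 k = 0) ∧
      (∀ k ∈ Finset.Icc 1 n, ab.1 k ≤ k ∧ 1 ≤ ab.2 k ∧ ab.2 k ≤ k) ∧
      (∀ m ∈ Finset.Icc 1 n, ∃ k ∈ Finset.Icc 1 n, ab.1 k = m ∨ ab.2 k = m)} =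
    2 ^ n *
      Nat.card {S : ℕ → Finset ℕ //
        (∀ k, k ∉ Finset.Icc 1 n → S k = ∅) ∧
        (∀ k ∈ Finset.Icc 1 n, S k ⊆ Finset.Icc 1 k ∧ (S k).Nonempty ∧ (S k).card ≤ 2) ∧
        (Finset.Icc 1 n).biUnion S = Finset.Icc 1 n} :=
  card_pairs_eq_two_pow_mul_card_set_sequences_general n
end
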